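/- arXiv:1607.05067 — 3 statements merged into one kernel-verified Lean document; each statement's English description precedes it below -/
import Mathlib

section
/- For any real numbers A, B with -1 ≤ B < A ≤ 1, any real λ, and any positive integer l, the identity λ²(A-B)² + Σ_{n=1}^{l-1} [(λ(A-B)+nB)² - n²] · Π_{j=0}^{n-1} ((λ(A-B)+Bj)/(j+1))² = (1/((l-1)!)²) · Π_{j=0}^{l-1} (λ(A-B)+Bj)² holds. -/
lemma prod_range_fact (n : ℕ) : (∏ j ∈ Finset.range n, ((j : ℝ) + 1)) = Nat.factorial n := by
  induction n with
  | zero => simp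
  | succ k ih => rw [Finset.prod_range_succ, ih, Nat.factorial_succ]; push_cast; ring

theorem coefficient_identity (A B lam : ℝ) (hB : -1 ≤ B) (hBA : B < A) (hA : A ≤ 1)
    (l : ℕ) (hl : 1 ≤ l) :
    lam ^ 2 * (A - B) ^ 2 +
      ∑ n ∈ Finset.Icc 1 (l - 1),
        ((lam * (A - B) + n * B) ^ 2 - (n : ℝ) ^ 2) *
          ∏ j ∈ Finset.range n, ((lam * (A - B) + B * j) / (j + 1)) ^ 2
      = (1 / ((Nat.factorial (l - 1) : ℝ)) ^ 2) *
          ∏ j ∈ Finset.range l, (lam * (A - B) + B * j) ^ 2 := by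
  induction l, hl using Nat.le_induction with
  | base => simp [Finset.prod_range_one]; ring
  | succ l hl ih =>
    obtain ⟨m, rfl⟩ : ∃ m, l = m + 1 := ⟨l - 1, by omega⟩
    simp only [Nat.add_sub_cancel] at ih ⊢
    rw [Finset.sum_Icc_succ_top (by omega), ← add_assoc, ih]
    have hP : (∏ j ∈ Finset.range (m + 1), ((lam * (A - B) + B * j) / (j + 1)) ^ 2)
        = (∏ j ∈ Finset.range (m + 1), (lam * (A - B) + B * j) ^ 2) /
          (Nat.factorial (m + 1) : ℝ) ^ 2 := by
      simp only [div_pow]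
      rw [Finset.prod_div_distrib, Finset.prod_pow, Finset.prod_pow, prod_range_fact]
    rw [hP]
    simp only [Finset.prod_range_succ]
    have hf0 : (Nat.factorial m : ℝ) ≠ 0 := Nat.cast_ne_zero.mpr (Nat.factorial_ne_zero m)
    have hf1 : (Nat.factorial (m + 1) : ℝ) ≠ 0 := Nat.cast_ne_zero.mpr (Nat.factorial_ne_zero _)
    have hfs : (Nat.factorial (m + 1) : ℝ) = (m + 1) * Nat.factorial m := by
      rw [Nat.factorial_succ]; push_cast; ring
    rw [hfs] at *
    push_cast
    field_simp
    ring
end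

section
/- Let -1 ≤ B < A ≤ 1, λ > 1, δ = (1-A)/(1-B), and suppose δ lies in the interval [(λ-[λ]+k)/λ, (λ-[λ]+k+1)/λ) for some k ∈ {0,1,...,[λ]-1}, with λ(1-δ) not an integer. If f ∈ S*(A,B) and (f(z)/z)^{-λ} = 1 + Σ_{n≥1} a_n(-λ,f) zⁿ, then |a_l(-λ,f)| ≤ Π_{j=0}^{l-1} (λ(A-B)+Bj)/(j+1) for l = 1, 2, ..., [λ]-k. -/
open Metric Complex

/-- The class `S*(A,B)`. -/
def IsJanowskiStarlike (A B : ℝ) (f : ℂ → ℂ) : Prop :=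
  AnalyticOn ℂ f (ball 0 1) ∧ f 0 = 0 ∧ deriv f 0 = 1 ∧
    ∃ ω : ℂ → ℂ, AnalyticOn ℂ ω (ball 0 1) ∧ (∀ z ∈ ball (0 : ℂ) 1, ‖ω z‖ ≤ 1) ∧
      ∀ z ∈ ball (0 : ℂ) 1,
        z * deriv f z * (1 + (B : ℂ) * z * ω z) = f z * (1 + (A : ℂ) * z * ω z)

/-- `a` is the sequence of Taylor coefficients of the branch of `(f z / z) ^ (-lam)`
normalized to equal `1` at the origin. -/
def NegPowCoeff (lam : ℝ) (f : ℂ → ℂ) (a : ℕ → ℂ) : Prop :=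
  ∃ h : ℂ → ℂ, AnalyticOn ℂ h (ball 0 1) ∧ h 0 = 0 ∧
    (∀ z ∈ ball (0 : ℂ) 1, f z = z * Complex.exp (h z)) ∧
    a 0 = 1 ∧
    ∀ z ∈ ball (0 : ℂ) 1,
      HasSum (fun n : ℕ => a n * z ^ n) (Complex.exp (-(lam : ℂ) * h z))

/-!
Write `F = (f(z)/z)^(-λ) = ∑ aₙ zⁿ`. The subordination `z f'/f = (1 + A z ω)/(1 + B z ω)`, with
`|ω| ≤ 1`, becomes `z F' = z ω φ` for `φ = -λ (A - B) F - B z F'`, whose coefficients are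
`-(λ (A - B) + B m) aₘ`. Clunie's method (Parseval's identity on circles of radius `r < 1`, using
that truncating `φ` at degree `n` does not change the first `n + 1` coefficients of `z ω φ`) gives
`∑_{j ≤ n} j² |aⱼ|² ≤ ∑_{m < n} (λ (A - B) + B m)² |aₘ|²`.
The hypothesis on `δ` makes `λ (A - B) + B m - m = (1 - B) (λ (1 - δ) - m)` positive for
`m < [λ] - k`, and the bound `Pₙ = ∏_{j < n} (λ (A - B) + B j)/(j + 1)` satisfies
`∑_{m < n} ((λ (A - B) + B m)² - m²) Pₘ² = n² Pₙ²`, so induction on `n` gives `|aₙ| ≤ Pₙ`.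
-/

open scoped Real

theorem eball_zero_one : Metric.eball (0 : ℂ) 1 = ball 0 1 := by
  simpa using Metric.eball_coe (x := (0 : ℂ)) (ε := 1)

section PowerSeries

variable {c : ℕ → ℂ} {v : ℂ → ℂ}

theorem hasFPowerSeriesOnBall_ofScalars_of_hasSum
    (hc : ∀ z ∈ ball (0 : ℂ) 1, HasSum (fun m => c m * z ^ m) (v z)) :
    HasFPowerSeriesOnBall v (FormalMultilinearSeries.ofScalars ℂ c) 0 1 where
  r_le := by
    refine ENNReal.le_of_forall_nnreal_lt fun ρ hρ =>
      FormalMultilinearSeries.le_radius_of_summable _ ?_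
    have hρ1 : (ρ : ℂ) ∈ ball (0 : ℂ) 1 := by simpa using hρ
    simpa [FormalMultilinearSeries.ofScalars_norm] using (hc ρ hρ1).summable.norm
  r_pos := one_pos
  hasSum {y} hy := by
    rw [eball_zero_one] at hy
    simpa [FormalMultilinearSeries.ofScalars_apply_eq, mul_comm] using hc y hy

theorem analyticOnNhd_of_hasSum
    (hc : ∀ z ∈ ball (0 : ℂ) 1, HasSum (fun m => c m * z ^ m) (v z)) :
    AnalyticOnNhd ℂ v (ball 0 1) := by
  simpa [eball_zero_one] using (hasFPowerSeriesOnBall_ofScalars_of_hasSum hc).analyticOnNhd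

theorem hasSum_mul_deriv_of_hasSum
    (hc : ∀ z ∈ ball (0 : ℂ) 1, HasSum (fun m => c m * z ^ m) (v z)) {z : ℂ}
    (hz : z ∈ ball (0 : ℂ) 1) :
    HasSum (fun m : ℕ => m * c m * z ^ m) (z * deriv v z) := by
  have h := ((hasFPowerSeriesOnBall_ofScalars_of_hasSum hc).fderiv.hasSum
    (by rwa [eball_zero_one])).mapL (ContinuousLinearMap.apply ℂ ℂ z)
  simp only [ContinuousLinearMap.apply_apply, FormalMultilinearSeries.derivSeries_apply_diag,
    FormalMultilinearSeries.ofScalars_apply_eq, zero_add, fderiv_eq_smul_deriv, smul_eq_mul] at h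
  refine (hasSum_nat_add_iff' 1).mp ?_
  simpa [pow_succ, mul_assoc, mul_comm, mul_left_comm] using h

theorem summable_tail_of_hasSum
    (hc : ∀ z ∈ ball (0 : ℂ) 1, HasSum (fun m => c m * z ^ m) (v z)) (n : ℕ) {z : ℂ}
    (hz : z ∈ ball (0 : ℂ) 1) : Summable (fun m => c (m + n) * z ^ m) := by
  rcases eq_or_ne z 0 with rfl | hz0
  · exact summable_of_ne_finset_zero (s := {0}) fun m hm => by
      simp [zero_pow (Finset.notMem_singleton.mp hm)]
  · refine (((summable_nat_add_iff n).mpr (hc z hz).summable).mul_left (z ^ n)⁻¹).congr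
      fun m => ?_
    rw [pow_add]
    field_simp

theorem pow_mul_tsum_tail_of_hasSum
    (hc : ∀ z ∈ ball (0 : ℂ) 1, HasSum (fun m => c m * z ^ m) (v z)) (n : ℕ) {z : ℂ}
    (hz : z ∈ ball (0 : ℂ) 1) :
    z ^ n * ∑' m, c (m + n) * z ^ m = v z - ∑ m ∈ Finset.range n, c m * z ^ m := by
  refine (((summable_tail_of_hasSum hc n hz).hasSum.mul_left (z ^ n)).congr_fun ?_).unique
    ((hasSum_nat_add_iff' n).mpr (hc z hz))
  intro m
  ring

end PowerSeries

section CircleFourier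

theorem fourierCoeffOn_two_pi (g : ℝ → ℂ) (n : ℤ) :
    fourierCoeffOn Real.two_pi_pos g n
      = (2 * π : ℂ)⁻¹ * ∫ t in 0..2 * π, exp (-(n * t * I)) * g t := by
  rw [fourierCoeffOn_eq_integral, sub_zero, one_div, Complex.real_smul, ofReal_inv]
  push_cast
  congr 2
  funext t
  rw [fourier_coe_apply, smul_eq_mul]
  congr 2
  field_simp
  push_cast
  ring

theorem integral_exp_int_mul_I (m : ℤ) :
    ∫ t in 0..2 * π, exp (m * t * I) = if m = 0 then (2 * π : ℂ) else 0 := by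
  split_ifs with hm
  · simp [hm]
  · have hmI : (m : ℂ) * I ≠ 0 := mul_ne_zero (by exact_mod_cast hm) I_ne_zero
    simp_rw [mul_right_comm _ _ I]
    rw [integral_exp_mul_complex hmI, ofReal_zero, mul_zero, exp_zero,
      show (m : ℂ) * I * ((2 * π : ℝ) : ℂ) = m * (2 * π * I) by push_cast; ring,
      exp_int_mul_two_pi_mul_I, sub_self, zero_div]

theorem Continuous.memLp_two_restrict_Ioc {g : ℝ → ℂ} (hg : Continuous g) (a b : ℝ) :
    MeasureTheory.MemLp g 2 (MeasureTheory.volume.restrict (Set.Ioc a b)) :=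
  (MeasureTheory.memLp_two_iff_integrable_sq_norm hg.aestronglyMeasurable).2
    (hg.norm.pow 2).integrableOn_Ioc

theorem circleMap_mem_ball_zero_one {r : ℝ} (hr0 : 0 ≤ r) (hr1 : r < 1) (t : ℝ) :
    circleMap 0 r t ∈ ball (0 : ℂ) 1 := by
  simpa [abs_of_nonneg hr0] using hr1

variable {c : ℕ → ℂ} {v : ℂ → ℂ} {r : ℝ}

theorem hasSum_fourierCoeffOn_circleMap
    (hc : ∀ z ∈ ball (0 : ℂ) 1, HasSum (fun m => c m * z ^ m) (v z))
    (hr0 : 0 ≤ r) (hr1 : r < 1) (n : ℤ) :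
    HasSum (fun m : ℕ => if (m : ℤ) = n then c m * r ^ m else 0)
      (fourierCoeffOn Real.two_pi_pos (fun t => v (circleMap 0 r t)) n) := by
  have hterm : ∀ m : ℕ, ∫ t in 0..2 * π, exp (-(n * t * I)) * (c m * circleMap 0 r t ^ m)
      = 2 * π * if (m : ℤ) = n then c m * r ^ m else 0 := fun m => by
    have hpt : ∀ t : ℝ, exp (-(n * t * I)) * (c m * circleMap 0 r t ^ m)
        = c m * r ^ m * exp (((m - n : ℤ) : ℂ) * t * I) := fun t => by
      rw [circleMap_zero, mul_pow, ← exp_nat_mul,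
        show ((m - n : ℤ) : ℂ) * t * I = m * (t * I) + -(n * t * I) by push_cast; ring, exp_add]
      ring
    simp_rw [hpt, intervalIntegral.integral_const_mul, integral_exp_int_mul_I, sub_eq_zero]
    split_ifs <;> simp [mul_comm]
  have hbound : Summable fun m => ‖c m‖ * r ^ m := by
    simpa [abs_of_nonneg hr0] using
      (hc r (by simpa [abs_of_nonneg hr0] using hr1)).summable.norm
  have hsum := intervalIntegral.hasSum_integral_of_dominated_convergence
    (a := 0) (b := 2 * π) (μ := MeasureTheory.volume)
    (F := fun (m : ℕ) t => exp (-(n * t * I)) * (c m * circleMap 0 r t ^ m))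
    (fun m _ => ‖c m‖ * r ^ m) (fun m => Continuous.aestronglyMeasurable (by fun_prop))
    (fun m => .of_forall fun t _ => by simp [norm_exp, abs_of_nonneg hr0])
    (.of_forall fun _ _ => hbound) intervalIntegrable_const
    (.of_forall fun t _ => (hc _ (circleMap_mem_ball_zero_one hr0 hr1 t)).mul_left _)
  rw [fourierCoeffOn_two_pi]
  simpa only [hterm, inv_mul_cancel_left₀ (by simp [Real.pi_ne_zero] : (2 * π : ℂ) ≠ 0)]
    using hsum.mul_left (2 * π : ℂ)⁻¹

theorem fourierCoeffOn_circleMap_natCast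
    (hc : ∀ z ∈ ball (0 : ℂ) 1, HasSum (fun m => c m * z ^ m) (v z))
    (hr0 : 0 ≤ r) (hr1 : r < 1) (j : ℕ) :
    fourierCoeffOn Real.two_pi_pos (fun t => v (circleMap 0 r t)) j = c j * r ^ j :=
  (hasSum_fourierCoeffOn_circleMap hc hr0 hr1 j).unique <| by
    simpa using hasSum_single (f := fun m : ℕ => if (m : ℤ) = j then c m * (r : ℂ) ^ m else 0) j
      fun m hm => by simp [hm]

theorem fourierCoeffOn_circleMap_of_neg
    (hc : ∀ z ∈ ball (0 : ℂ) 1, HasSum (fun m => c m * z ^ m) (v z))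
    (hr0 : 0 ≤ r) (hr1 : r < 1) {n : ℤ} (hn : n < 0) :
    fourierCoeffOn Real.two_pi_pos (fun t => v (circleMap 0 r t)) n = 0 := by
  refine (hasSum_fourierCoeffOn_circleMap hc hr0 hr1 n).unique ?_
  convert hasSum_zero with m
  rw [if_neg (by omega)]

/-- Parseval's identity on the circle of radius `r`. -/
theorem hasSum_sq_norm_mul_pow_of_hasSum
    (hc : ∀ z ∈ ball (0 : ℂ) 1, HasSum (fun m => c m * z ^ m) (v z))
    (hr0 : 0 ≤ r) (hr1 : r < 1) :
    HasSum (fun m => ‖c m‖ ^ 2 * r ^ (2 * m))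
      ((2 * π)⁻¹ * ∫ t in 0..2 * π, ‖v (circleMap 0 r t)‖ ^ 2) := by
  have hcont : Continuous fun t => v (circleMap 0 r t) :=
    (analyticOnNhd_of_hasSum hc).continuousOn.comp_continuous (continuous_circleMap 0 r)
      (circleMap_mem_ball_zero_one hr0 hr1)
  have h := hasSum_sq_fourierCoeffOn Real.two_pi_pos (hcont.memLp_two_restrict_Ioc 0 (2 * π))
  rw [sub_zero, smul_eq_mul, ← Nat.cast_injective.hasSum_iff fun n hn =>
    by rw [fourierCoeffOn_circleMap_of_neg hc hr0 hr1 (by simpa using hn), norm_zero,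
      zero_pow two_ne_zero]] at h
  simpa [Function.comp_def, fourierCoeffOn_circleMap_natCast hc hr0 hr1, mul_pow, ← pow_mul',
    abs_of_nonneg hr0] using h

theorem sum_sq_norm_mul_pow_eq_integral_circleMap (b : ℕ → ℂ) (n : ℕ) (hr0 : 0 ≤ r)
    (hr1 : r < 1) :
    ∑ m ∈ Finset.range n, ‖b m‖ ^ 2 * r ^ (2 * m)
      = (2 * π)⁻¹ * ∫ t in 0..2 * π, ‖∑ m ∈ Finset.range n, b m * circleMap 0 r t ^ m‖ ^ 2 := by
  set b' : ℕ → ℂ := fun m => if m < n then b m else 0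
  have hb' : ∀ z ∈ ball (0 : ℂ) 1,
      HasSum (fun m => b' m * z ^ m) (∑ m ∈ Finset.range n, b m * z ^ m) := fun z _ => by
    rw [show ∑ m ∈ Finset.range n, b m * z ^ m = ∑ m ∈ Finset.range n, b' m * z ^ m from
      Finset.sum_congr rfl fun m hm => by simp [b', Finset.mem_range.mp hm]]
    exact hasSum_sum_of_ne_finset_zero fun m hm => by simp_all [b']
  have hfin : HasSum (fun m => ‖b' m‖ ^ 2 * r ^ (2 * m))
      (∑ m ∈ Finset.range n, ‖b' m‖ ^ 2 * r ^ (2 * m)) :=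
    hasSum_sum_of_ne_finset_zero fun m hm => by simp_all [b']
  rw [(hasSum_sq_norm_mul_pow_of_hasSum hb' hr0 hr1).unique hfin]
  exact Finset.sum_congr rfl fun m hm => by simp [b', Finset.mem_range.mp hm]

theorem fourierCoeffOn_add_circleMap_pow_mul {w : ℝ → ℂ} {q : ℂ → ℂ} (hw : Continuous w)
    (hr : 0 ≤ r) (hq : DifferentiableOn ℂ q (closedBall 0 r)) {j k : ℕ} (hjk : j ≤ k) :
    fourierCoeffOn Real.two_pi_pos
        (fun t => w t + circleMap 0 r t ^ (k + 1) * q (circleMap 0 r t)) j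
      = fourierCoeffOn Real.two_pi_pos w j := by
  obtain ⟨d, rfl⟩ := Nat.exists_eq_add_of_le hjk
  have hcauchy : (∮ z in C(0, r), z ^ d * q z) = 0 :=
    (((differentiableOn_id.pow _).mul hq).diffContOnCl_ball subset_rfl).circleIntegral_eq_zero hr
  have hqc : Continuous fun t => q (circleMap 0 r t) :=
    hq.continuousOn.comp_continuous (continuous_circleMap 0 r) fun t => by simp [abs_of_nonneg hr]
  have hpt : ∀ t : ℝ, exp (-(j * t * I)) * (circleMap 0 r t ^ (j + d + 1) * q (circleMap 0 r t))
      = r ^ j / I * (deriv (circleMap 0 r) t • (circleMap 0 r t ^ d * q (circleMap 0 r t))) :=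
    fun t => by
      have hj : exp (-(j * t * I)) * circleMap 0 r t ^ j = r ^ j := by
        rw [circleMap_zero, mul_pow, ← exp_nat_mul, mul_left_comm, ← exp_add,
          show -(j * t * I) + j * (t * I) = 0 by ring, exp_zero, mul_one]
      rw [deriv_circleMap, smul_eq_mul, div_mul_eq_mul_div, eq_div_iff I_ne_zero, ← hj]
      ring
  rw [fourierCoeffOn_two_pi, fourierCoeffOn_two_pi]
  congr 1
  simp only [Int.cast_natCast, mul_add]
  have hint : IntervalIntegrable
      (fun t => exp (-(j * t * I)) * (circleMap 0 r t ^ (j + d + 1) * q (circleMap 0 r t)))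
      MeasureTheory.volume 0 (2 * π) :=
    (Continuous.mul (by fun_prop) ((by fun_prop : Continuous _).mul hqc)).intervalIntegrable _ _
  rw [intervalIntegral.integral_add (Continuous.intervalIntegrable (by fun_prop) _ _) hint]
  simp_rw [hpt]
  unfold circleIntegral at hcauchy
  rw [intervalIntegral.integral_const_mul, hcauchy, mul_zero, add_zero]

section Clunie

variable {ω φ : ℂ → ℂ} {b g : ℕ → ℂ} {r : ℝ}

theorem fourierCoeffOn_circleMap_mul_truncation
    (hω : AnalyticOnNhd ℂ ω (ball 0 1))
    (hφ : ∀ z ∈ ball (0 : ℂ) 1, HasSum (fun m => b m * z ^ m) (φ z))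
    (hg : ∀ z ∈ ball (0 : ℂ) 1, HasSum (fun m => g m * z ^ m) (z * ω z * φ z))
    (hr0 : 0 ≤ r) (hr1 : r < 1) {j n : ℕ} (hj : j ≤ n) :
    fourierCoeffOn Real.two_pi_pos (fun t => circleMap 0 r t * ω (circleMap 0 r t) *
        ∑ m ∈ Finset.range n, b m * circleMap 0 r t ^ m) j = g j * r ^ j := by
  have hmem := circleMap_mem_ball_zero_one hr0 hr1
  have hcont : Continuous fun t => circleMap 0 r t * ω (circleMap 0 r t) *
      ∑ m ∈ Finset.range n, b m * circleMap 0 r t ^ m :=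
    ((continuous_circleMap 0 r).mul
      (hω.continuousOn.comp_continuous (continuous_circleMap 0 r) hmem)).mul (by fun_prop)
  have htail : DifferentiableOn ℂ (fun z => ω z * ∑' m, b (m + n) * z ^ m) (closedBall 0 r) :=
    (hω.differentiableOn.mul (analyticOnNhd_of_hasSum fun z hz =>
      (summable_tail_of_hasSum hφ n hz).hasSum).differentiableOn).mono
      (closedBall_subset_ball hr1)
  -- `z ω φ` and `z ω (φ truncated at degree n)` differ by `z ^ (n + 1) ω(z) ∑' m, b (m + n) zᵐ`.
  rw [← fourierCoeffOn_add_circleMap_pow_mul hcont hr0 htail hj,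
    ← fourierCoeffOn_circleMap_natCast hg hr0 hr1]
  congr 1
  funext t
  linear_combination (circleMap 0 r t * ω (circleMap 0 r t)) *
    pow_mul_tsum_tail_of_hasSum hφ n (hmem t)

theorem clunie_sum_sq_norm_mul_pow_le (hω : AnalyticOnNhd ℂ ω (ball 0 1))
    (hω1 : ∀ z ∈ ball (0 : ℂ) 1, ‖ω z‖ ≤ 1)
    (hφ : ∀ z ∈ ball (0 : ℂ) 1, HasSum (fun m => b m * z ^ m) (φ z))
    (hg : ∀ z ∈ ball (0 : ℂ) 1, HasSum (fun m => g m * z ^ m) (z * ω z * φ z))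
    (n : ℕ) (hr0 : 0 ≤ r) (hr1 : r < 1) :
    ∑ j ∈ Finset.range (n + 1), ‖g j‖ ^ 2 * r ^ (2 * j)
      ≤ ∑ m ∈ Finset.range n, ‖b m‖ ^ 2 * r ^ (2 * m) := by
  set s : ℝ → ℂ := fun t => ∑ m ∈ Finset.range n, b m * circleMap 0 r t ^ m
  set Ψ : ℝ → ℂ := fun t => circleMap 0 r t * ω (circleMap 0 r t) * s t
  have hs : Continuous s := by fun_prop
  have hΨ : Continuous Ψ :=
    ((continuous_circleMap 0 r).mul (hω.continuousOn.comp_continuous (continuous_circleMap 0 r)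
      (circleMap_mem_ball_zero_one hr0 hr1))).mul hs
  have hbessel := sum_le_hasSum ((Finset.range (n + 1)).map Nat.castEmbedding)
    (fun _ _ => sq_nonneg _)
    (hasSum_sq_fourierCoeffOn Real.two_pi_pos (hΨ.memLp_two_restrict_Ioc 0 (2 * π)))
  have hmono : ∫ t in 0..2 * π, ‖Ψ t‖ ^ 2 ≤ ∫ t in 0..2 * π, ‖s t‖ ^ 2 := by
    refine intervalIntegral.integral_mono_on Real.two_pi_pos.le
      ((hΨ.norm.pow 2).intervalIntegrable _ _) ((hs.norm.pow 2).intervalIntegrable _ _)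
      fun t _ => pow_le_pow_left₀ (norm_nonneg _) ?_ 2
    rw [norm_mul, norm_mul, norm_circleMap_zero, abs_of_nonneg hr0]
    exact mul_le_of_le_one_left (norm_nonneg _)
      (mul_le_one₀ hr1.le (norm_nonneg _) (hω1 _ (circleMap_mem_ball_zero_one hr0 hr1 t)))
  calc ∑ j ∈ Finset.range (n + 1), ‖g j‖ ^ 2 * r ^ (2 * j)
      = ∑ j ∈ Finset.range (n + 1), ‖fourierCoeffOn Real.two_pi_pos Ψ j‖ ^ 2 :=
        Finset.sum_congr rfl fun j hj => by
          rw [fourierCoeffOn_circleMap_mul_truncation hω hφ hg hr0 hr1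
            (Nat.lt_succ_iff.mp (Finset.mem_range.mp hj)), norm_mul, mul_pow, norm_pow,
            norm_real, Real.norm_of_nonneg hr0, ← pow_mul, mul_comm j]
    _ ≤ (2 * π)⁻¹ * ∫ t in 0..2 * π, ‖Ψ t‖ ^ 2 := by simpa using hbessel
    _ ≤ (2 * π)⁻¹ * ∫ t in 0..2 * π, ‖s t‖ ^ 2 := by gcongr
    _ = ∑ m ∈ Finset.range n, ‖b m‖ ^ 2 * r ^ (2 * m) :=
        (sum_sq_norm_mul_pow_eq_integral_circleMap b n hr0 hr1).symm

theorem clunie_sum_sq_norm_le (hω : AnalyticOnNhd ℂ ω (ball 0 1))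
    (hω1 : ∀ z ∈ ball (0 : ℂ) 1, ‖ω z‖ ≤ 1)
    (hφ : ∀ z ∈ ball (0 : ℂ) 1, HasSum (fun m => b m * z ^ m) (φ z))
    (hg : ∀ z ∈ ball (0 : ℂ) 1, HasSum (fun m => g m * z ^ m) (z * ω z * φ z)) (n : ℕ) :
    ∑ j ∈ Finset.range (n + 1), ‖g j‖ ^ 2 ≤ ∑ m ∈ Finset.range n, ‖b m‖ ^ 2 := by
  have hlim : ∀ (c : ℕ → ℂ) (N : ℕ), Filter.Tendsto
      (fun r : ℝ => ∑ j ∈ Finset.range N, ‖c j‖ ^ 2 * r ^ (2 * j)) (nhdsWithin 1 (Set.Iio 1))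
      (nhds (∑ j ∈ Finset.range N, ‖c j‖ ^ 2)) := fun c N => by
    simpa using ((by fun_prop : Continuous fun r : ℝ =>
      ∑ j ∈ Finset.range N, ‖c j‖ ^ 2 * r ^ (2 * j)).tendsto 1).mono_left nhdsWithin_le_nhds
  refine le_of_tendsto_of_tendsto (hlim g _) (hlim b n) ?_
  filter_upwards [Ioo_mem_nhdsLT zero_lt_one] with r hr
  exact clunie_sum_sq_norm_mul_pow_le hω hω1 hφ hg n hr.1.le hr.2

end Clunie

section Janowski

variable {A B lam : ℝ} {f : ℂ → ℂ} {a : ℕ → ℂ}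

theorem one_add_mul_deriv_mul_eq {h ω : ℂ → ℂ} {z : ℂ} (hz : z ∈ ball (0 : ℂ) 1)
    (hh : DifferentiableAt ℂ h z) (hfh : ∀ w ∈ ball (0 : ℂ) 1, f w = w * exp (h w))
    (hfω : z * deriv f z * (1 + B * z * ω z) = f z * (1 + A * z * ω z)) :
    (1 + z * deriv h z) * (1 + B * z * ω z) = 1 + A * z * ω z := by
  rcases eq_or_ne z 0 with rfl | hz0
  · simp
  have hderiv : deriv f z = exp (h z) * (1 + z * deriv h z) := by
    have hev : f =ᶠ[nhds z] fun w => w * exp (h w) :=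
      Filter.eventually_of_mem (isOpen_ball.mem_nhds hz) hfh
    rw [hev.deriv_eq, ((hasDerivAt_id' z).fun_mul hh.hasDerivAt.cexp).deriv]
    ring
  rw [hderiv, hfh z hz] at hfω
  apply mul_left_cancel₀ (mul_ne_zero hz0 (exp_ne_zero (h z)))
  linear_combination hfω

/-- Here `φ = -λ (A - B) F - B z F'` with `F = (f(z)/z)^(-λ)`: the subordination equation for
`f` becomes `z F' = z ω φ`. -/
theorem NegPowCoeff.exists_clunie_representation (hf : IsJanowskiStarlike A B f)
    (ha : NegPowCoeff lam f a) :
    ∃ ω φ : ℂ → ℂ, AnalyticOnNhd ℂ ω (ball 0 1) ∧ (∀ z ∈ ball (0 : ℂ) 1, ‖ω z‖ ≤ 1) ∧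
      (∀ z ∈ ball (0 : ℂ) 1,
        HasSum (fun m : ℕ => -((lam * (A - B) + B * m : ℝ) : ℂ) * a m * z ^ m) (φ z)) ∧
      ∀ z ∈ ball (0 : ℂ) 1, HasSum (fun m : ℕ => (m : ℂ) * a m * z ^ m) (z * ω z * φ z) := by
  obtain ⟨-, -, -, ω, hω, hω1, hfω⟩ := hf
  obtain ⟨h, hh, -, hfh, -, hF⟩ := ha
  set F := fun z => exp (-(lam : ℂ) * h z)
  refine ⟨ω, fun z => -((lam * (A - B) : ℝ) : ℂ) * F z - B * (z * deriv F z),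
    isOpen_ball.analyticOn_iff_analyticOnNhd.mp hω, hω1, fun z hz => ?_, fun z hz => ?_⟩
  · refine (((hF z hz).mul_left (-((lam * (A - B) : ℝ) : ℂ))).sub
      ((hasSum_mul_deriv_of_hasSum hF hz).mul_left (B : ℂ))).congr_fun fun m => ?_
    push_cast
    ring
  · have hhz : DifferentiableAt ℂ h z := hh.differentiableOn.differentiableAt
      (isOpen_ball.mem_nhds hz)
    have hFz : deriv F z = F z * (-lam * deriv h z) := (hhz.hasDerivAt.const_mul _).cexp.deriv
    convert hasSum_mul_deriv_of_hasSum hF hz using 1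
    beta_reduce
    rw [hFz]
    push_cast
    linear_combination (lam * F z) * one_add_mul_deriv_mul_eq hz hhz hfh (hfω z hz)

theorem NegPowCoeff.coeff_zero (ha : NegPowCoeff lam f a) : a 0 = 1 := by
  obtain ⟨-, -, -, -, ha0, -⟩ := ha
  exact ha0

theorem NegPowCoeff.sum_sq_mul_sq_norm_le (hf : IsJanowskiStarlike A B f)
    (ha : NegPowCoeff lam f a) (n : ℕ) :
    ∑ j ∈ Finset.range (n + 1), (j : ℝ) ^ 2 * ‖a j‖ ^ 2
      ≤ ∑ m ∈ Finset.range n, (lam * (A - B) + B * m) ^ 2 * ‖a m‖ ^ 2 := by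
  obtain ⟨ω, φ, hω, hω1, hφ, hg⟩ := ha.exists_clunie_representation hf
  simpa only [norm_mul, mul_pow, norm_neg, norm_real, Real.norm_eq_abs, sq_abs, norm_natCast]
    using clunie_sum_sq_norm_le hω hω1 hφ hg n

end Janowski

theorem sum_sq_sub_sq_mul_prod_sq (c B : ℝ) (n : ℕ) :
    ∑ m ∈ Finset.range n,
        ((c + B * m) ^ 2 - m ^ 2) * (∏ j ∈ Finset.range m, (c + B * j) / (j + 1)) ^ 2
      = n ^ 2 * (∏ j ∈ Finset.range n, (c + B * j) / (j + 1)) ^ 2 := by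
  induction n with
  | zero => simp
  | succ n ih =>
    rw [Finset.sum_range_succ, ih, Finset.prod_range_succ]
    push_cast
    field_simp
    ring

theorem le_prod_of_sum_sq_le {x : ℕ → ℝ} {c B : ℝ} {N : ℕ} (hx : ∀ n, 0 ≤ x n) (hx0 : x 0 ≤ 1)
    (hsum : ∀ n, ∑ j ∈ Finset.range (n + 1), (j : ℝ) ^ 2 * x j ^ 2
      ≤ ∑ m ∈ Finset.range n, (c + B * m) ^ 2 * x m ^ 2)
    (hpos : ∀ m < N, (m : ℝ) < c + B * m) {n : ℕ} (hn : n ≤ N) :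
    x n ≤ ∏ j ∈ Finset.range n, (c + B * j) / (j + 1) := by
  induction n using Nat.strong_induction_on with
  | _ n ih =>
  set P : ℕ → ℝ := fun n => ∏ j ∈ Finset.range n, (c + B * j) / (j + 1)
  have hsq_le : ∀ m < N, (m : ℝ) ^ 2 ≤ (c + B * m) ^ 2 := fun m hm => by
    nlinarith [hpos m hm, (m.cast_nonneg : (0 : ℝ) ≤ m)]
  have hP : 0 ≤ P n := Finset.prod_nonneg fun j hj => div_nonneg
    (by linarith [hpos j (by grind), (j.cast_nonneg : (0 : ℝ) ≤ j)])
    (by positivity)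
  rcases Nat.eq_zero_or_pos n with rfl | hn0
  · simpa using hx0
  have hstep : (n : ℝ) ^ 2 * x n ^ 2 ≤ (n : ℝ) ^ 2 * P n ^ 2 := calc
    (n : ℝ) ^ 2 * x n ^ 2 ≤ ∑ m ∈ Finset.range n, ((c + B * m) ^ 2 - m ^ 2) * x m ^ 2 := by
        have := hsum n
        rw [Finset.sum_range_succ] at this
        simp only [sub_mul, Finset.sum_sub_distrib]
        linarith
    _ ≤ ∑ m ∈ Finset.range n, ((c + B * m) ^ 2 - m ^ 2) * P m ^ 2 :=
        Finset.sum_le_sum fun m hm => by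
          have hm := Finset.mem_range.mp hm
          have := hsq_le m (by omega)
          gcongr
          · exact hx m
          · exact ih m hm (by omega)
    _ = n ^ 2 * P n ^ 2 := sum_sq_sub_sq_mul_prod_sq c B n
  have hn2 : (0 : ℝ) < (n : ℝ) ^ 2 := by positivity
  exact (pow_le_pow_iff_left₀ (hx n) hP two_ne_zero).mp (le_of_mul_le_mul_left hstep hn2)

theorem natCast_lt_mul_sub_add_mul_of_lt {A B lam δ : ℝ} (hBA : B < A) (hA : A ≤ 1)
    (hδ : δ = (1 - A) / (1 - B)) {k : ℕ} (hδ2 : δ < (lam - ⌊lam⌋₊ + k + 1) / lam) {m : ℕ}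
    (hm : m < ⌊lam⌋₊ - k) : (m : ℝ) < lam * (A - B) + B * m := by
  have hB : 0 < 1 - B := by linarith
  have hmk : (m : ℝ) + k + 1 ≤ ⌊lam⌋₊ := by exact_mod_cast (by omega : m + k + 1 ≤ ⌊lam⌋₊)
  have hlam : 0 < lam := by
    have := Nat.one_le_floor_iff lam |>.mp (by omega)
    linarith
  have hδlam : δ * lam < lam - ⌊lam⌋₊ + k + 1 := (lt_div_iff₀ hlam).mp hδ2
  have hAB : A - B = (1 - B) * (1 - δ) := by
    rw [hδ]
    field_simp
    ring
  have hgap : 0 < lam * (1 - δ) - m := by linarith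
  nlinarith [mul_pos hB hgap]

theorem coeff_bound_Ik_initial_general (A B lam δ : ℝ) (hBA : B < A) (hA : A ≤ 1)
    (hδ : δ = (1 - A) / (1 - B))
    (k : ℕ)
    (hδ2 : δ < (lam - ⌊lam⌋₊ + k + 1) / lam)
    (f : ℂ → ℂ) (hf : IsJanowskiStarlike A B f)
    (a : ℕ → ℂ) (ha : NegPowCoeff lam f a)
    (l : ℕ) (hl2 : l ≤ ⌊lam⌋₊ - k) :
    ‖a l‖ ≤ ∏ j ∈ Finset.range l, (lam * (A - B) + B * j) / (j + 1) :=
  le_prod_of_sum_sq_le (fun n => norm_nonneg (a n)) (by simp [ha.coeff_zero])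
    (ha.sum_sq_mul_sq_norm_le hf) (fun _ hm => natCast_lt_mul_sub_add_mul_of_lt hBA hA hδ hδ2 hm)
    hl2

theorem coeff_bound_Ik_initial (A B lam δ : ℝ) (hB : -1 ≤ B) (hBA : B < A) (hA : A ≤ 1)
    (hlam : 1 < lam) (hδ : δ = (1 - A) / (1 - B))
    (k : ℕ) (hk : k ≤ ⌊lam⌋₊ - 1)
    (hδ1 : (lam - ⌊lam⌋₊ + k) / lam ≤ δ) (hδ2 : δ < (lam - ⌊lam⌋₊ + k + 1) / lam)
    (hnotint : ¬ ∃ m : ℤ, lam * (1 - δ) = m)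
    (f : ℂ → ℂ) (hf : IsJanowskiStarlike A B f)
    (a : ℕ → ℂ) (ha : NegPowCoeff lam f a)
    (l : ℕ) (hl1 : 1 ≤ l) (hl2 : l ≤ ⌊lam⌋₊ - k) :
    ‖a l‖ ≤ ∏ j ∈ Finset.range l, (lam * (A - B) + B * j) / (j + 1) :=
  coeff_bound_Ik_initial_general A B lam δ hBA hA hδ k hδ2 f hf a ha l hl2
end CircleFourier
end

section
/- Let -1 ≤ B < A ≤ 1, λ > 1, δ = (1-A)/(1-B), and suppose δ ∈ [(λ-1)/λ, 1). If f ∈ S*(A,B) and (f(z)/z)^{-λ} = 1 + Σ_{n≥1} a_n(-λ,f) zⁿ, then |a_l(-λ,f)| ≤ λ(A-B)/l for all l ≥ 1. -/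
open Metric Complex MeasureTheory intervalIntegral
open scoped NNReal ENNReal

noncomputable section CluniePrf

namespace CluniePrf

/-- `exp (i n θ)` -/
def em (n : ℤ) (θ : ℝ) : ℂ := Complex.exp ((n : ℂ) * (θ : ℂ) * Complex.I)

/-- the circle point `r e^{iθ}` -/
def cir (r θ : ℝ) : ℂ := (r : ℂ) * Complex.exp ((θ : ℂ) * Complex.I)

lemma em_mul (j k : ℤ) (θ : ℝ) : em j θ * em k θ = em (j + k) θ := by
  simp only [em, ← Complex.exp_add]
  congr 1
  push_cast
  ring

lemma norm_em (n : ℤ) (θ : ℝ) : ‖em n θ‖ = 1 := by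
  simp only [em, Complex.norm_exp]
  simp [Complex.mul_re]

lemma conj_em (n : ℤ) (θ : ℝ) : (starRingEnd ℂ) (em n θ) = em (-n) θ := by
  simp only [em, ← Complex.exp_conj, map_mul, Complex.conj_I, Complex.conj_ofReal, map_intCast]
  congr 1
  push_cast
  ring

lemma em_zero (n : ℤ) : em n 0 = 1 := by simp [em]

lemma em_two_pi (n : ℤ) : em n (2 * Real.pi) = 1 := by
  simpa [em, mul_assoc, mul_comm, mul_left_comm] using Complex.exp_int_mul_two_pi_mul_I n

lemma cont_em (n : ℤ) : Continuous (em n) := by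
  unfold em; fun_prop

lemma cont_cir (r : ℝ) : Continuous (cir r) := by
  unfold cir; fun_prop

lemma norm_cir {r : ℝ} (hr : 0 ≤ r) (θ : ℝ) : ‖cir r θ‖ = r := by
  have : ‖Complex.exp ((θ:ℂ) * Complex.I)‖ = 1 := by
    simpa using norm_em 1 θ
  have hr' : |r| = r := _root_.abs_of_nonneg hr
  simp [cir, norm_mul, this, _root_.abs_of_nonneg hr]

lemma cir_mem_ball {r R : ℝ} (hr : 0 ≤ r) (hrR : r < R) (θ : ℝ) :
    cir r θ ∈ ball (0 : ℂ) R := by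
  simp [mem_ball, dist_eq_norm, norm_cir hr, hrR]

lemma cir_pow (r : ℝ) (θ : ℝ) (k : ℕ) : (cir r θ) ^ k = ((r ^ k : ℝ) : ℂ) * em k θ := by
  simp only [cir, em, mul_pow, ← Complex.exp_nat_mul]
  push_cast
  ring_nf

lemma cir_eq_em (r θ : ℝ) : cir r θ = (r : ℂ) * em 1 θ := by simp [cir, em]

lemma integral_em (n : ℤ) :
    ∫ θ in (0:ℝ)..(2 * Real.pi), em n θ = if n = 0 then ((2 * Real.pi : ℝ) : ℂ) else 0 := by
  rcases eq_or_ne n 0 with h | h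
  · simp [h, em]
  · have hc : (n : ℂ) * Complex.I ≠ 0 := by
      simp [Complex.I_ne_zero, h]
    have heq : ∀ θ : ℝ, em n θ = Complex.exp (((n : ℂ) * Complex.I) * (θ : ℝ)) := by
      intro θ; unfold em; ring_nf
    rw [if_neg h]
    calc ∫ θ in (0:ℝ)..(2 * Real.pi), em n θ
        = ∫ θ in (0:ℝ)..(2 * Real.pi), Complex.exp (((n : ℂ) * Complex.I) * (θ:ℝ)) := by
          simp_rw [heq]
      _ = (Complex.exp ((n:ℂ) * Complex.I * (2 * Real.pi)) -
            Complex.exp ((n:ℂ) * Complex.I * (0:ℝ))) / ((n:ℂ) * Complex.I) := by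
          rw [integral_exp_mul_complex hc]
          push_cast
          ring_nf
      _ = 0 := by
          have h1 : Complex.exp ((n:ℂ) * Complex.I * (2 * Real.pi)) = 1 := by
            have := Complex.exp_int_mul_two_pi_mul_I n
            rw [← this]; push_cast; ring_nf
          rw [h1]
          simp


lemma summable_coeff {R r : ℝ} {u : ℂ → ℂ} {cs : ℕ → ℂ}
    (hrep : ∀ z ∈ ball (0:ℂ) R, HasSum (fun k => cs k * z ^ k) (u z))
    (hr0 : 0 ≤ r) (hrR : r < R) :
    Summable (fun k => ‖cs k‖ * r ^ k) := by
  set ρ : ℝ := (r + R) / 2 with hρdef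
  have hρ0 : 0 ≤ ρ := by simp only [hρdef]; linarith
  have hrρ : r < ρ := by simp only [hρdef]; linarith
  have hρR : ρ < R := by simp only [hρdef]; linarith
  have hmem : ((ρ : ℂ)) ∈ ball (0:ℂ) R := by
    simp [mem_ball, dist_eq_norm, Complex.norm_real, _root_.abs_of_nonneg hρ0, hρR]
  have hs := (hrep _ hmem).summable
  have ht : Filter.Tendsto (fun k => ‖cs k * (ρ:ℂ) ^ k‖) Filter.atTop (nhds 0) := by
    simpa using (tendsto_zero_iff_norm_tendsto_zero.mp hs.tendsto_atTop_zero)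
  obtain ⟨M, hM⟩ := ht.bddAbove_range
  have hM' : ∀ k : ℕ, ‖cs k‖ * ρ ^ k ≤ M := by
    intro k
    have := hM (Set.mem_range_self k)
    simpa [norm_mul, norm_pow, Complex.norm_real, _root_.abs_of_nonneg hρ0] using this
  have hρpos : 0 < ρ := lt_of_le_of_lt hr0 hrρ
  have hgeo : Summable (fun k : ℕ => M * (r / ρ) ^ k) := by
    apply Summable.mul_left
    apply summable_geometric_of_lt_one (div_nonneg hr0 hρ0)
    rw [div_lt_one hρpos]; exact hrρ
  apply Summable.of_nonneg_of_le (fun k => mul_nonneg (norm_nonneg _) (pow_nonneg hr0 k)) _ hgeo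
  intro k
  have : ‖cs k‖ * r ^ k = (‖cs k‖ * ρ ^ k) * (r / ρ) ^ k := by
    rw [mul_assoc, ← mul_pow, mul_div_cancel₀ r hρpos.ne']
  rw [this]
  apply mul_le_mul_of_nonneg_right (hM' k) (by positivity)

/-- Swap an infinite sum with an interval integral, uniform constant bounds. -/
lemma swap_sum_integral (F : ℕ → ℝ → ℂ) (f : ℝ → ℂ) (b : ℕ → ℝ)
    (hFc : ∀ k, Continuous (F k)) (hFb : ∀ k θ, ‖F k θ‖ ≤ b k) (hb : Summable b)
    (hlim : ∀ θ, HasSum (fun k => F k θ) (f θ)) :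
    HasSum (fun k => ∫ θ in (0:ℝ)..(2 * Real.pi), F k θ)
      (∫ θ in (0:ℝ)..(2 * Real.pi), f θ) := by
  apply intervalIntegral.hasSum_integral_of_dominated_convergence (bound := fun k _ => b k)
  · exact fun k => (hFc k).aestronglyMeasurable
  · intro k
    filter_upwards with θ _ using hFb k θ
  · filter_upwards with θ _ using hb
  · exact intervalIntegrable_const
  · filter_upwards with θ _ using hlim θ

/-- Coefficient extraction: Fourier/Taylor coefficients of an analytic function on the circle. -/
lemma extraction {R r : ℝ} {u : ℂ → ℂ} {cs : ℕ → ℂ}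
    (hrep : ∀ z ∈ ball (0:ℂ) R, HasSum (fun k => cs k * z ^ k) (u z))
    (hr0 : 0 < r) (hrR : r < R) (n : ℕ) :
    ∫ θ in (0:ℝ)..(2 * Real.pi), u (cir r θ) * em (-(n:ℤ)) θ
      = (2 * Real.pi) * (cs n * (r:ℂ) ^ n) := by
  have hsum := summable_coeff hrep hr0.le hrR
  have hswap := swap_sum_integral
      (fun k θ => cs k * (cir r θ) ^ k * em (-(n:ℤ)) θ)
      (fun θ => u (cir r θ) * em (-(n:ℤ)) θ)
      (fun k => ‖cs k‖ * r ^ k)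
      (fun k => ((continuous_const.mul ((cont_cir r).pow k)).mul (cont_em _)))
      (fun k θ => by
        rw [norm_mul, norm_mul, norm_em, norm_pow, norm_cir hr0.le, mul_one])
      hsum
      (fun θ => (hrep _ (cir_mem_ball hr0.le hrR θ)).mul_right _)
  have hterm : ∀ k : ℕ, (∫ θ in (0:ℝ)..(2 * Real.pi), cs k * (cir r θ) ^ k * em (-(n:ℤ)) θ)
      = if k = n then (2 * Real.pi) * (cs n * (r:ℂ) ^ n) else 0 := by
    intro k
    have hptw : ∀ θ : ℝ, cs k * (cir r θ) ^ k * em (-(n:ℤ)) θ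
        = (cs k * (r:ℂ)^k) * em ((k:ℤ) - n) θ := by
      intro θ
      rw [cir_pow, show ((k:ℤ) - n) = (k:ℤ) + (-(n:ℤ)) by ring, ← em_mul]
      push_cast
      ring
    simp_rw [hptw]
    rw [intervalIntegral.integral_const_mul, integral_em]
    rcases eq_or_ne k n with rfl | hkn
    · simp [mul_comm, mul_left_comm]
    · have : (k:ℤ) - n ≠ 0 := by
        simpa [sub_eq_zero] using fun hh => hkn (by exact_mod_cast hh)
      simp [this, hkn]
  have h2 : HasSum (fun k => if k = n then (2 * Real.pi) * (cs n * (r:ℂ) ^ n) else 0)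
      (∫ θ in (0:ℝ)..(2 * Real.pi), u (cir r θ) * em (-(n:ℤ)) θ) := by
    convert hswap using 2 with k
    rw [hterm k]
  have h3 : HasSum (fun k => if k = n then (2 * Real.pi) * (cs n * (r:ℂ) ^ n) else 0)
      ((2 * Real.pi) * (cs n * (r:ℂ) ^ n)) := by
    exact hasSum_ite_eq n _
  exact h2.unique h3


lemma cir_eq_circleMap (r : ℝ) : cir r = circleMap 0 r := by
  funext θ; simp [cir, circleMap]

lemma hasDerivAt_em (k : ℤ) (θ : ℝ) :
    HasDerivAt (em k) ((k:ℂ) * Complex.I * em k θ) θ := by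
  have h1 : HasDerivAt (fun t : ℝ => ((k:ℂ) * (t:ℂ) * Complex.I)) ((k:ℂ) * Complex.I) θ := by
    simpa using ((Complex.ofRealCLM.hasDerivAt (x := θ)).const_mul ((k:ℂ))).mul_const Complex.I
  have h2 := h1.cexp
  have hval : (k:ℂ) * Complex.I * em k θ
      = Complex.exp ((k:ℂ) * (θ:ℂ) * Complex.I) * ((k:ℂ) * Complex.I) := by
    unfold em; ring
  rw [hval]
  exact h2

lemma hasDerivAt_cir (r : ℝ) (θ : ℝ) :
    HasDerivAt (cir r) (cir r θ * Complex.I) θ := by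
  have h1 : HasDerivAt (fun t : ℝ => ((t:ℂ) * Complex.I)) (Complex.I) θ := by
    simpa using (Complex.ofRealCLM.hasDerivAt (x := θ)).mul_const Complex.I
  have h2 := (h1.cexp).const_mul (r : ℂ)
  have hval : cir r θ * Complex.I = (r:ℂ) * (Complex.exp ((θ:ℂ) * Complex.I) * Complex.I) := by
    unfold cir; ring
  rw [hval]
  exact h2

lemma cir_two_pi (r : ℝ) : cir r (2 * Real.pi) = cir r 0 := by
  have : Complex.exp (((2 * Real.pi : ℝ):ℂ) * Complex.I) = 1 := by
    simpa [em] using em_two_pi 1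
  simp [cir, this]

/-- Cauchy's theorem: positive-frequency Fourier coefficients of an analytic function vanish. -/
lemma omega_orth {u : ℂ → ℂ} (hu : DifferentiableOn ℂ u (ball 0 1)) {r : ℝ}
    (hr0 : 0 < r) (hr1 : r < 1) {m : ℕ} (hm : 1 ≤ m) :
    ∫ θ in (0:ℝ)..(2 * Real.pi), u (cir r θ) * em (m:ℤ) θ = 0 := by
  have hsub : closedBall (0:ℂ) r ⊆ ball 0 1 := closedBall_subset_ball hr1
  have hsub' : ball (0:ℂ) r ⊆ ball 0 1 := ball_subset_ball hr1.le
  have h0 : (∮ z in C(0, r), u z * z ^ (m - 1)) = 0 := by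
    apply circleIntegral_eq_zero_of_differentiable_on_off_countable hr0.le Set.countable_empty
    · exact ((hu.continuousOn.mono hsub).mul ((continuous_pow (m-1)).continuousOn))
    · intro z hz
      have hz1 : z ∈ ball (0:ℂ) 1 := hsub' hz.1
      exact (hu.differentiableAt (isOpen_ball.mem_nhds hz1)).mul (differentiableAt_pow _)
  have hI : (∮ z in C(0, r), u z * z ^ (m - 1))
      = (Complex.I * (r:ℂ)^m) * ∫ θ in (0:ℝ)..(2 * Real.pi), u (cir r θ) * em (m:ℤ) θ := by
    rw [← intervalIntegral.integral_const_mul]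
    simp only [circleIntegral, deriv_circleMap, ← cir_eq_circleMap]
    apply intervalIntegral.integral_congr
    intro θ _
    have hdc : deriv (cir r) θ = cir r θ * Complex.I := (hasDerivAt_cir r θ).deriv
    have h1 : (cir r θ) ^ (m - 1) = ((r ^ (m-1) : ℝ):ℂ) * em ((m:ℤ) - 1) θ := by
      rw [cir_pow]
      congr 2
      omega
    have h2 : em 1 θ * em ((m:ℤ) - 1) θ = em (m:ℤ) θ := by
      rw [em_mul]; congr 1; ring
    have h3 : cir r θ = (r:ℂ) * em 1 θ := cir_eq_em r θ
    have hrm : ((r:ℂ))^m = (r:ℂ) * ((r^(m-1):ℝ):ℂ) := by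
      push_cast
      rw [← pow_succ']
      congr 1
      omega
    show deriv (cir r) θ • (u (cir r θ) * (cir r θ)^(m-1))
        = Complex.I * (r:ℂ)^m * (u (cir r θ) * em (m:ℤ) θ)
    rw [hdc, smul_eq_mul, h1, hrm]
    linear_combination (Complex.I * u (cir r θ) * ((r^(m-1):ℝ):ℂ))
      * (em ((m:ℤ)-1) θ * h3 + (r:ℂ) * h2)
  rw [hI] at h0
  have hne : (Complex.I * (r:ℂ)^m) ≠ 0 := by
    apply mul_ne_zero Complex.I_ne_zero
    exact pow_ne_zero _ (by exact_mod_cast hr0.ne')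
  exact (mul_eq_zero.mp h0).resolve_left hne

/-- Integration by parts: Fourier coefficients of `z g'(z)` on the circle. -/
lemma deriv_coeff {g : ℂ → ℂ} (hg : DifferentiableOn ℂ g (ball 0 1))
    (hg' : ContinuousOn (deriv g) (ball 0 1)) {r : ℝ} (hr0 : 0 < r) (hr1 : r < 1) (n : ℕ) :
    ∫ θ in (0:ℝ)..(2 * Real.pi), (cir r θ * deriv g (cir r θ)) * em (-(n:ℤ)) θ
      = (n:ℂ) * ∫ θ in (0:ℝ)..(2 * Real.pi), g (cir r θ) * em (-(n:ℤ)) θ := by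
  set u : ℝ → ℂ := fun θ => g (cir r θ) with hu_def
  set v : ℝ → ℂ := fun θ => em (-(n:ℤ)) θ with hv_def
  set u' : ℝ → ℂ := fun θ => (cir r θ * Complex.I) * deriv g (cir r θ) with hu'_def
  set v' : ℝ → ℂ := fun θ => ((-(n:ℤ):ℂ) * Complex.I) * em (-(n:ℤ)) θ with hv'_def
  have hmem : ∀ θ : ℝ, cir r θ ∈ ball (0:ℂ) 1 := cir_mem_ball hr0.le hr1
  have hucont : Continuous (fun θ => g (cir r θ)) :=
    hg.continuousOn.comp_continuous (cont_cir r) hmem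
  have hdgcont : Continuous (fun θ => deriv g (cir r θ)) :=
    hg'.comp_continuous (cont_cir r) hmem
  have hu : ∀ x ∈ Set.uIcc (0:ℝ) (2*Real.pi), HasDerivAt u (u' x) x := by
    intro x _
    have hd : HasDerivAt g (deriv g (cir r x)) (cir r x) :=
      (hg.differentiableAt (isOpen_ball.mem_nhds (hmem x))).hasDerivAt
    have := hd.scomp x (hasDerivAt_cir r x)
    simpa [u', u, smul_eq_mul, mul_comm, Function.comp_def] using this
  have hv : ∀ x ∈ Set.uIcc (0:ℝ) (2*Real.pi), HasDerivAt v (v' x) x := by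
    intro x _
    simpa [v', v] using hasDerivAt_em (-(n:ℤ)) x
  have hu'int : IntervalIntegrable u' MeasureTheory.volume 0 (2*Real.pi) :=
    (((cont_cir r).mul continuous_const).mul hdgcont).intervalIntegrable _ _
  have hv'int : IntervalIntegrable v' MeasureTheory.volume 0 (2*Real.pi) :=
    (continuous_const.mul (cont_em _)).intervalIntegrable _ _
  have hparts := intervalIntegral.integral_mul_deriv_eq_deriv_mul hu hv hu'int hv'int
  -- hparts : ∫ u * v' = u b * v b - u a * v a - ∫ u' * v
  have hbd : u (2*Real.pi) * v (2*Real.pi) - u 0 * v 0 = 0 := by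
    simp [u, v, cir_two_pi, em_two_pi, em_zero]
  rw [hbd] at hparts
  -- hparts : ∫ u x * v' x = 0 - ∫ u' x * v x
  have e1 : ∫ x in (0:ℝ)..(2*Real.pi), u x * v' x
      = ((-(n:ℤ):ℂ) * Complex.I) * ∫ θ in (0:ℝ)..(2*Real.pi), g (cir r θ) * em (-(n:ℤ)) θ := by
    rw [← intervalIntegral.integral_const_mul]
    apply intervalIntegral.integral_congr
    intro θ _
    simp only [u, v']
    ring
  have e2 : ∫ x in (0:ℝ)..(2*Real.pi), u' x * v x
      = Complex.I * ∫ θ in (0:ℝ)..(2*Real.pi), (cir r θ * deriv g (cir r θ)) * em (-(n:ℤ)) θ := by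
    rw [← intervalIntegral.integral_const_mul]
    apply intervalIntegral.integral_congr
    intro θ _
    simp only [u', v]
    ring
  rw [e1, e2] at hparts
  linear_combination (-Complex.I) * hparts +
    ((∫ θ in (0:ℝ)..(2*Real.pi), (cir r θ * deriv g (cir r θ)) * em (-(n:ℤ)) θ)
      - (n:ℂ) * ∫ θ in (0:ℝ)..(2*Real.pi), g (cir r θ) * em (-(n:ℤ)) θ) * Complex.I_sq


lemma integral_re_comm {w : ℝ → ℂ} (hw : Continuous w) :
    ∫ θ in (0:ℝ)..(2*Real.pi), (w θ).re = (∫ θ in (0:ℝ)..(2*Real.pi), w θ).re := by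
  have h2π : (0:ℝ) ≤ 2*Real.pi := by positivity
  rw [intervalIntegral.integral_of_le h2π, intervalIntegral.integral_of_le h2π]
  have hint : MeasureTheory.Integrable w (MeasureTheory.volume.restrict (Set.Ioc 0 (2*Real.pi))) := by
    apply Continuous.integrableOn_Ioc hw
  exact _root_.integral_re hint

lemma norm_sub_sq_complex (x y : ℂ) :
    ‖x - y‖^2 = ‖x‖^2 - 2*(x * (starRingEnd ℂ) y).re + ‖y‖^2 := by
  simp only [Complex.sq_norm]
  rw [Complex.normSq_sub]
  ring

lemma integral_poly_orth (d : ℕ → ℂ) (M : ℕ) (n : ℕ) (hn : n ∈ Finset.range M) :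
    ∫ θ in (0:ℝ)..(2*Real.pi), (∑ k ∈ Finset.range M, d k * em (k:ℤ) θ) * em (-(n:ℤ)) θ
      = (2*Real.pi) * d n := by
  have hptw : ∀ θ ∈ Set.uIcc (0:ℝ) (2*Real.pi),
      (∑ k ∈ Finset.range M, d k * em (k:ℤ) θ) * em (-(n:ℤ)) θ
      = ∑ k ∈ Finset.range M, d k * em ((k:ℤ) - n) θ := by
    intro θ _
    rw [Finset.sum_mul]
    apply Finset.sum_congr rfl
    intro k _
    rw [mul_assoc, em_mul, show (k:ℤ) + -(n:ℤ) = (k:ℤ) - n by ring]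
  rw [intervalIntegral.integral_congr hptw, intervalIntegral.integral_finset_sum
    (fun k _ => (continuous_const.mul (cont_em _)).intervalIntegrable (u := fun θ => d k * em ((k:ℤ) - n) θ) _ _)]
  simp_rw [intervalIntegral.integral_const_mul, integral_em]
  rw [Finset.sum_eq_single n]
  · simp [mul_comm]
  · intro k _ hkn
    have : (k:ℤ) - n ≠ 0 := by
      simpa [sub_eq_zero] using fun hh => hkn (by exact_mod_cast hh)
    simp [this]
  · intro hc
    exact absurd hn hc

lemma integral_mul_conj_poly {w : ℝ → ℂ} (hw : Continuous w) (d : ℕ → ℂ) (M : ℕ)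
    (hval : ∀ n ∈ Finset.range M,
      (∫ θ in (0:ℝ)..(2*Real.pi), w θ * em (-(n:ℤ)) θ) = (2*Real.pi) * d n) :
    ∫ θ in (0:ℝ)..(2*Real.pi), w θ * (starRingEnd ℂ) (∑ k ∈ Finset.range M, d k * em (k:ℤ) θ)
      = ((2*Real.pi * ∑ k ∈ Finset.range M, ‖d k‖^2 : ℝ) : ℂ) := by
  have hptw : ∀ θ ∈ Set.uIcc (0:ℝ) (2*Real.pi),
      w θ * (starRingEnd ℂ) (∑ k ∈ Finset.range M, d k * em (k:ℤ) θ)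
      = ∑ k ∈ Finset.range M, (starRingEnd ℂ) (d k) * (w θ * em (-(k:ℤ)) θ) := by
    intro θ _
    rw [map_sum, Finset.mul_sum]
    apply Finset.sum_congr rfl
    intro k _
    rw [map_mul, conj_em]
    ring
  rw [intervalIntegral.integral_congr hptw, intervalIntegral.integral_finset_sum
    (fun k _ => (continuous_const.mul (hw.mul (cont_em _))).intervalIntegrable (u := fun θ => (starRingEnd ℂ) (d k) * (w θ * em (-(k:ℤ)) θ)) _ _)]
  have : ∀ k ∈ Finset.range M,
      (∫ θ in (0:ℝ)..(2*Real.pi), (starRingEnd ℂ) (d k) * (w θ * em (-(k:ℤ)) θ))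
      = (2*Real.pi) * (((‖d k‖^2 : ℝ)) : ℂ) := by
    intro k hk
    rw [intervalIntegral.integral_const_mul, hval k hk]
    rw [show (starRingEnd ℂ) (d k) * ((2*Real.pi) * d k)
        = (2*Real.pi) * ((starRingEnd ℂ) (d k) * d k) by ring]
    congr 1
    rw [Complex.conj_mul']
    norm_cast
  rw [Finset.sum_congr rfl this, ← Finset.mul_sum]
  push_cast
  ring

/-- Clunie's inequality. -/
lemma clunie_core {F G v : ℂ → ℂ} {R r : ℝ}
    (hr0 : 0 < r) (hrR : r < R) (hR1 : R ≤ 1)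
    (hFc : ContinuousOn F (ball 0 1)) (hGd : DifferentiableOn ℂ G (ball 0 1))
    (hvd : DifferentiableOn ℂ v (ball 0 1)) (hv1 : ∀ z ∈ ball (0:ℂ) 1, ‖v z‖ ≤ 1)
    (hFG : ∀ z ∈ ball (0:ℂ) 1, F z = v z * G z)
    (cF cG : ℕ → ℂ)
    (hGrep : ∀ z ∈ ball (0:ℂ) R, HasSum (fun k => cG k * z ^ k) (G z))
    (hcF : ∀ n : ℕ, ∫ θ in (0:ℝ)..(2*Real.pi), F (cir r θ) * em (-(n:ℤ)) θ
        = (2*Real.pi) * (cF n * (r:ℂ) ^ n))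
    (N : ℕ) :
    ∑ n ∈ Finset.range (N+1), ‖cF n * (r:ℂ)^n‖^2
      ≤ ∑ n ∈ Finset.range (N+1), ‖cG n * (r:ℂ)^n‖^2 := by
  have hr1 : r < 1 := lt_of_lt_of_le hrR hR1
  have hmem : ∀ θ : ℝ, cir r θ ∈ ball (0:ℂ) 1 := cir_mem_ball hr0.le hr1
  set M := N + 1 with hM
  set dF : ℕ → ℂ := fun n => cF n * (r:ℂ)^n with hdF
  set dG : ℕ → ℂ := fun n => cG n * (r:ℂ)^n with hdG
  set P : ℝ → ℂ := fun θ => ∑ k ∈ Finset.range M, dF k * em (k:ℤ) θ with hP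
  set Q : ℝ → ℂ := fun θ => ∑ k ∈ Finset.range M, dG k * em (k:ℤ) θ with hQ
  set H : ℝ → ℂ := fun θ => v (cir r θ) * Q θ with hH
  have hPc : Continuous P := continuous_finset_sum _ (fun k _ => continuous_const.mul (cont_em _))
  have hQc : Continuous Q := continuous_finset_sum _ (fun k _ => continuous_const.mul (cont_em _))
  have hvc : Continuous (fun θ => v (cir r θ)) :=
    hvd.continuousOn.comp_continuous (cont_cir r) hmem
  have hFcc : Continuous (fun θ => F (cir r θ)) := hFc.comp_continuous (cont_cir r) hmem
  have hGcc : Continuous (fun θ => G (cir r θ)) :=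
    hGd.continuousOn.comp_continuous (cont_cir r) hmem
  have hHc : Continuous H := hvc.mul hQc
  -- the polynomial truncation of G on the circle
  have hQval : ∀ θ : ℝ, Q θ = ∑ k ∈ Finset.range M, cG k * (cir r θ)^k := by
    intro θ
    apply Finset.sum_congr rfl
    intro k _
    rw [cir_pow]
    push_cast
    ring
  -- Step A : tail orthogonality
  have stepA : ∀ n : ℕ, n < M →
      (∫ θ in (0:ℝ)..(2*Real.pi), (G (cir r θ) - Q θ) * (v (cir r θ) * em (-(n:ℤ)) θ)) = 0 := by
    intro n hn
    have hsum : Summable (fun k => ‖cG k‖ * r ^ k) := summable_coeff hGrep hr0.le hrR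
    set Fk : ℕ → ℝ → ℂ := fun k θ =>
      (if k < M then 0 else cG k * (cir r θ)^k) * (v (cir r θ) * em (-(n:ℤ)) θ) with hFk
    set b : ℕ → ℝ := fun k => if k < M then 0 else ‖cG k‖ * r^k with hb
    have hbs : Summable b := by
      apply Summable.of_nonneg_of_le _ _ hsum
      · intro k
        by_cases h : k < M
        · simp [hb, h]
        · simp only [hb, if_neg h]
          exact mul_nonneg (norm_nonneg _) (pow_nonneg hr0.le k)
      · intro k
        by_cases h : k < M
        · simp only [hb, if_pos h]
          exact mul_nonneg (norm_nonneg _) (pow_nonneg hr0.le k)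
        · simp [hb, if_neg h]
    have hFkc : ∀ k, Continuous (Fk k) := by
      intro k
      by_cases h : k < M
      · simp only [hFk, if_pos h]
        exact continuous_const.mul (hvc.mul (cont_em _))
      · simp only [hFk, if_neg h]
        exact ((continuous_const.mul ((cont_cir r).pow k)).mul (hvc.mul (cont_em _)))
    have hFkb : ∀ k θ, ‖Fk k θ‖ ≤ b k := by
      intro k θ
      by_cases h : k < M
      · simp [hFk, hb, if_pos h]
      · simp only [hFk, hb, if_neg h]
        rw [norm_mul, norm_mul, norm_mul, norm_em, norm_pow, norm_cir hr0.le, mul_one]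
        apply mul_le_of_le_one_right _ (hv1 _ (hmem θ))
        positivity
    have hlim : ∀ θ : ℝ, HasSum (fun k => Fk k θ)
        ((G (cir r θ) - Q θ) * (v (cir r θ) * em (-(n:ℤ)) θ)) := by
      intro θ
      have h1 : HasSum (fun k => cG k * (cir r θ)^k) (G (cir r θ)) :=
        hGrep _ (cir_mem_ball hr0.le hrR θ)
      have h2 : HasSum (fun k => if k < M then cG k * (cir r θ)^k else 0)
          (∑ k ∈ Finset.range M, cG k * (cir r θ)^k) := by
        have h0 := hasSum_sum_of_ne_finset_zero
          (L := SummationFilter.unconditional ℕ) (s := Finset.range M) (f := fun k => if k < M then cG k * (cir r θ)^k else 0)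
          (by intro k hk
              have hk' : ¬ k < M := by simpa using hk
              simp [hk'])
        have h2' : (∑ k ∈ Finset.range M, (if k < M then cG k * (cir r θ)^k else 0))
            = ∑ k ∈ Finset.range M, cG k * (cir r θ)^k :=
          Finset.sum_congr rfl (fun k hk => if_pos (Finset.mem_range.mp hk))
        rwa [h2'] at h0
      have h3 := (h1.sub h2).mul_right (v (cir r θ) * em (-(n:ℤ)) θ)
      rw [← hQval θ] at h3
      have e : ∀ k, Fk k θ = (cG k * cir r θ ^ k - if k < M then cG k * cir r θ ^ k else 0)
          * (v (cir r θ) * em (-(n:ℤ)) θ) := by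
        intro k
        by_cases h : k < M <;> simp [hFk, h]
      simp only [e]
      exact h3
    have hswap := swap_sum_integral Fk _ b hFkc hFkb hbs hlim
    have hterm : ∀ k : ℕ, (∫ θ in (0:ℝ)..(2*Real.pi), Fk k θ) = 0 := by
      intro k
      by_cases h : k < M
      · simp [hFk, if_pos h]
      · push_neg at h
        have hkn : n < k := lt_of_lt_of_le hn h
        have hptw : ∀ θ ∈ Set.uIcc (0:ℝ) (2*Real.pi), Fk k θ
            = (cG k * ((r^k:ℝ):ℂ)) * ((fun z => v z) (cir r θ) * em ((k - n : ℕ):ℤ) θ) := by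
          intro θ _
          simp only [hFk, if_neg (not_lt.mpr h)]
          rw [cir_pow]
          have : em (k:ℤ) θ * em (-(n:ℤ)) θ = em (((k - n : ℕ):ℤ)) θ := by
            rw [em_mul]
            congr 1
            omega
          calc cG k * (((r^k:ℝ):ℂ) * em (k:ℤ) θ) * (v (cir r θ) * em (-(n:ℤ)) θ)
              = (cG k * ((r^k:ℝ):ℂ)) * (v (cir r θ) * (em (k:ℤ) θ * em (-(n:ℤ)) θ)) := by ring
            _ = _ := by rw [this]
        rw [intervalIntegral.integral_congr hptw, intervalIntegral.integral_const_mul,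
          omega_orth hvd hr0 hr1 (by omega), mul_zero]
    have : (fun k => ∫ θ in (0:ℝ)..(2*Real.pi), Fk k θ) = fun _ => (0:ℂ) := funext hterm
    rw [this] at hswap
    exact hswap.unique hasSum_zero
  -- Step B : Fourier coefficients of H
  have stepB : ∀ n : ℕ, n < M →
      (∫ θ in (0:ℝ)..(2*Real.pi), H θ * em (-(n:ℤ)) θ) = (2*Real.pi) * dF n := by
    intro n hn
    have hptw : ∀ θ ∈ Set.uIcc (0:ℝ) (2*Real.pi), H θ * em (-(n:ℤ)) θ
        = F (cir r θ) * em (-(n:ℤ)) θ - (G (cir r θ) - Q θ) * (v (cir r θ) * em (-(n:ℤ)) θ) := by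
      intro θ _
      rw [hFG _ (hmem θ)]
      simp only [hH]
      ring
    rw [intervalIntegral.integral_congr hptw, intervalIntegral.integral_sub
      ((hFcc.mul (cont_em _)).intervalIntegrable (u := fun θ => F (cir r θ) * em (-(n:ℤ)) θ) _ _)
      (((hGcc.sub hQc).mul (hvc.mul (cont_em _))).intervalIntegrable (u := fun θ => (G (cir r θ) - Q θ) * (v (cir r θ) * em (-(n:ℤ)) θ)) _ _),
      hcF n, stepA n hn, sub_zero]
  -- Step C : complex Parseval identities
  have hPval : ∀ n ∈ Finset.range M,
      (∫ θ in (0:ℝ)..(2*Real.pi), P θ * em (-(n:ℤ)) θ) = (2*Real.pi) * dF n :=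
    fun n hn => integral_poly_orth dF M n hn
  have hQval' : ∀ n ∈ Finset.range M,
      (∫ θ in (0:ℝ)..(2*Real.pi), Q θ * em (-(n:ℤ)) θ) = (2*Real.pi) * dG n :=
    fun n hn => integral_poly_orth dG M n hn
  have hHP : ∫ θ in (0:ℝ)..(2*Real.pi), H θ * (starRingEnd ℂ) (P θ)
      = ((2*Real.pi * ∑ k ∈ Finset.range M, ‖dF k‖^2 : ℝ) : ℂ) :=
    integral_mul_conj_poly hHc dF M (fun n hn => stepB n (Finset.mem_range.mp hn))
  have hPP : ∫ θ in (0:ℝ)..(2*Real.pi), P θ * (starRingEnd ℂ) (P θ)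
      = ((2*Real.pi * ∑ k ∈ Finset.range M, ‖dF k‖^2 : ℝ) : ℂ) :=
    integral_mul_conj_poly hPc dF M hPval
  have hQQ : ∫ θ in (0:ℝ)..(2*Real.pi), Q θ * (starRingEnd ℂ) (Q θ)
      = ((2*Real.pi * ∑ k ∈ Finset.range M, ‖dG k‖^2 : ℝ) : ℂ) :=
    integral_mul_conj_poly hQc dG M hQval'
  -- Step D : real estimates
  set SF : ℝ := ∑ k ∈ Finset.range M, ‖dF k‖^2 with hSF
  set SG : ℝ := ∑ k ∈ Finset.range M, ‖dG k‖^2 with hSG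
  have hIP : ∫ θ in (0:ℝ)..(2*Real.pi), ‖P θ‖^2 = 2*Real.pi * SF := by
    have h1 : ∀ θ ∈ Set.uIcc (0:ℝ) (2*Real.pi), ‖P θ‖^2 = (P θ * (starRingEnd ℂ) (P θ)).re := by
      intro θ _
      rw [Complex.mul_conj]
      simp [Complex.sq_norm]
    rw [intervalIntegral.integral_congr h1,
      integral_re_comm (w := fun θ => P θ * (starRingEnd ℂ) (P θ))
        (hPc.mul (Complex.continuous_conj.comp hPc)), hPP]
    simp
  have hIQ : ∫ θ in (0:ℝ)..(2*Real.pi), ‖Q θ‖^2 = 2*Real.pi * SG := by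
    have h1 : ∀ θ ∈ Set.uIcc (0:ℝ) (2*Real.pi), ‖Q θ‖^2 = (Q θ * (starRingEnd ℂ) (Q θ)).re := by
      intro θ _
      rw [Complex.mul_conj]
      simp [Complex.sq_norm]
    rw [intervalIntegral.integral_congr h1,
      integral_re_comm (w := fun θ => Q θ * (starRingEnd ℂ) (Q θ))
        (hQc.mul (Complex.continuous_conj.comp hQc)), hQQ]
    simp
  have hHPre : (∫ θ in (0:ℝ)..(2*Real.pi), (H θ * (starRingEnd ℂ) (P θ)).re) = 2*Real.pi * SF := by
    rw [integral_re_comm (w := fun θ => H θ * (starRingEnd ℂ) (P θ))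
      (hHc.mul (Complex.continuous_conj.comp hPc)), hHP]
    simp
  have hexp : (0:ℝ) ≤ ∫ θ in (0:ℝ)..(2*Real.pi), ‖H θ - P θ‖^2 := by
    apply intervalIntegral.integral_nonneg (by positivity)
    intro θ _
    positivity
  have hsplit : ∫ θ in (0:ℝ)..(2*Real.pi), ‖H θ - P θ‖^2
      = (∫ θ in (0:ℝ)..(2*Real.pi), ‖H θ‖^2)
        - 2 * (∫ θ in (0:ℝ)..(2*Real.pi), (H θ * (starRingEnd ℂ) (P θ)).re)
        + ∫ θ in (0:ℝ)..(2*Real.pi), ‖P θ‖^2 := by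
    have h1 : ∀ θ ∈ Set.uIcc (0:ℝ) (2*Real.pi), ‖H θ - P θ‖^2
        = ‖H θ‖^2 - 2*(H θ * (starRingEnd ℂ) (P θ)).re + ‖P θ‖^2 :=
      fun θ _ => norm_sub_sq_complex _ _
    have i1 : IntervalIntegrable (fun θ => ‖H θ‖^2) MeasureTheory.volume 0 (2*Real.pi) :=
      (hHc.norm.pow 2).intervalIntegrable _ _
    have i2 : IntervalIntegrable (fun θ => 2*(H θ * (starRingEnd ℂ) (P θ)).re)
        MeasureTheory.volume 0 (2*Real.pi) := by
      apply Continuous.intervalIntegrable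
      exact continuous_const.mul (Complex.continuous_re.comp
        (hHc.mul (Complex.continuous_conj.comp hPc)))
    have i3 : IntervalIntegrable (fun θ => ‖P θ‖^2) MeasureTheory.volume 0 (2*Real.pi) :=
      (hPc.norm.pow 2).intervalIntegrable _ _
    rw [intervalIntegral.integral_congr h1, intervalIntegral.integral_add (i1.sub i2) i3,
      intervalIntegral.integral_sub i1 i2, intervalIntegral.integral_const_mul]
  have hmono : (∫ θ in (0:ℝ)..(2*Real.pi), ‖H θ‖^2) ≤ ∫ θ in (0:ℝ)..(2*Real.pi), ‖Q θ‖^2 := by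
    apply intervalIntegral.integral_mono_on (by positivity)
      ((hHc.norm.pow 2).intervalIntegrable _ _) ((hQc.norm.pow 2).intervalIntegrable _ _)
    intro θ _
    have : ‖H θ‖ ≤ ‖Q θ‖ := by
      have h0 : ‖H θ‖ = ‖v (cir r θ)‖ * ‖Q θ‖ := norm_mul _ _
      rw [h0]
      calc ‖v (cir r θ)‖ * ‖Q θ‖ ≤ 1 * ‖Q θ‖ :=
            mul_le_mul_of_nonneg_right (hv1 _ (hmem θ)) (norm_nonneg _)
        _ = ‖Q θ‖ := one_mul _
    exact pow_le_pow_left₀ (norm_nonneg _) this 2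
  have hπ : (0:ℝ) < 2*Real.pi := by positivity
  have hfin : 2*Real.pi * SF ≤ 2*Real.pi * SG := by
    have h1 : 2*Real.pi*SF ≤ ∫ θ in (0:ℝ)..(2*Real.pi), ‖H θ‖^2 := by nlinarith [hexp, hsplit, hIP, hHPre]
    calc 2*Real.pi*SF ≤ ∫ θ in (0:ℝ)..(2*Real.pi), ‖H θ‖^2 := h1
      _ ≤ ∫ θ in (0:ℝ)..(2*Real.pi), ‖Q θ‖^2 := hmono
      _ = 2*Real.pi*SG := hIQ
  exact le_of_mul_le_mul_left hfin hπ


lemma em_zero_freq (θ : ℝ) : em 0 θ = 1 := by simp [em]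

lemma rep_of_differentiable {G : ℂ → ℂ} (hGd : DifferentiableOn ℂ G (ball 0 1))
    {R : ℝ} (hR0 : 0 < R) (hR1 : R < 1) :
    ∃ q : ℕ → ℂ, ∀ z ∈ ball (0:ℂ) R, HasSum (fun k => q k * z ^ k) (G z) := by
  have hcoe : ((R.toNNReal : ℝ≥0) : ℝ) = R := Real.coe_toNNReal _ hR0.le
  have hsub : closedBall (0:ℂ) (R.toNNReal : ℝ) ⊆ ball 0 1 := by
    rw [hcoe]; exact closedBall_subset_ball hR1
  have hps := (hGd.mono hsub).hasFPowerSeriesOnBall (R := R.toNNReal)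
    (by simpa using hR0)
  refine ⟨fun n => (cauchyPowerSeries G 0 R.toNNReal).coeff n, ?_⟩
  intro z hz
  have hz' : z ∈ Metric.eball (0:ℂ) (R.toNNReal : ℝ≥0∞) := by
    rw [Metric.emetric_ball_nnreal]
    simpa [hcoe] using hz
  have h2 := hps.hasSum hz'
  rw [zero_add] at h2
  have hfun : (fun n => (cauchyPowerSeries G 0 R.toNNReal) n fun _ => z)
      = fun n => (cauchyPowerSeries G 0 R.toNNReal).coeff n * z ^ n := by
    funext n
    rw [FormalMultilinearSeries.apply_eq_pow_smul_coeff, smul_eq_mul, mul_comm]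
  rwa [hfun] at h2

end CluniePrf



set_option maxHeartbeats 1000000 in
theorem coeff_bound_last_interval (A B lam δ : ℝ) (hB : -1 ≤ B) (hBA : B < A) (hA : A ≤ 1)
    (hlam : 1 < lam) (hδ : δ = (1 - A) / (1 - B))
    (hδ1 : (lam - 1) / lam ≤ δ) (hδ2 : δ < 1)
    (f : ℂ → ℂ) (hf : IsJanowskiStarlike A B f)
    (a : ℕ → ℂ) (ha : NegPowCoeff lam f a) (l : ℕ) (hl : 1 ≤ l) :
    ‖a l‖ ≤ lam * (A - B) / l := by
  obtain ⟨hfan, hf0, hf'0, ω, hωan, hω1, hode⟩ := hf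
  obtain ⟨h, hhan, hh0, hfz, ha0, hasum⟩ := ha
  -- real and complex constants
  set c : ℝ := lam * (A - B) with hc
  set C : ℂ := (lam : ℂ) * ((A : ℂ) - (B : ℂ)) with hC
  have hCc : C = ((c : ℝ) : ℂ) := by rw [hC, hc]; push_cast; ring
  have h1B : (0:ℝ) < 1 - B := by linarith
  have hlam0 : (0:ℝ) < lam := by linarith
  have hc0 : 0 < c := by
    rw [hc]; apply mul_pos hlam0; linarith
  have hcB : c ≤ 1 - B := by
    rw [hδ] at hδ1
    rw [div_le_div_iff₀ hlam0 h1B] at hδ1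
    rw [hc]; nlinarith [hδ1]
  -- basic differentiability
  have hh_dAt : ∀ z ∈ ball (0:ℂ) 1, DifferentiableAt ℂ h z := fun z hz =>
    ((hhan z hz).differentiableWithinAt.mono (Set.subset_insert _ _)).differentiableAt (isOpen_ball.mem_nhds hz)
  have hω_dOn : DifferentiableOn ℂ ω (ball 0 1) := fun z hz =>
    (hωan z hz).differentiableWithinAt.mono (Set.subset_insert _ _)
  set g : ℂ → ℂ := fun z => Complex.exp (-(lam : ℂ) * h z) with hg
  have hg_dAt : ∀ z ∈ ball (0:ℂ) 1, HasDerivAt g (g z * (-(lam:ℂ) * deriv h z)) z := by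
    intro z hz
    have hd := ((hh_dAt z hz).hasDerivAt.const_mul (-(lam:ℂ))).cexp
    exact hd
  have hg_dOn : DifferentiableOn ℂ g (ball 0 1) := fun z hz =>
    ((hg_dAt z hz).differentiableAt).differentiableWithinAt
  have hg_an : AnalyticOnNhd ℂ g (ball 0 1) := hg_dOn.analyticOnNhd isOpen_ball
  have hdg_dOn : DifferentiableOn ℂ (deriv g) (ball 0 1) :=
    (hg_an.deriv).differentiableOn
  have hdg_cont : ContinuousOn (deriv g) (ball 0 1) := hdg_dOn.continuousOn
  set F : ℂ → ℂ := fun z => z * deriv g z with hF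
  set G : ℂ → ℂ := fun z => -(z * (C * g z + (B:ℂ) * F z)) with hG
  have hF_dOn : DifferentiableOn ℂ F (ball 0 1) := differentiableOn_id.mul hdg_dOn
  have hF_cont : ContinuousOn F (ball 0 1) := hF_dOn.continuousOn
  have huCB_dOn : DifferentiableOn ℂ (fun z => C * g z + (B:ℂ) * F z) (ball 0 1) :=
    ((hg_dOn.const_mul C).add (hF_dOn.const_mul (B:ℂ)))
  have hG_dOn : DifferentiableOn ℂ G (ball 0 1) :=
    (differentiableOn_id.mul huCB_dOn).neg
  -- the subordination ODE in terms of h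
  have hkey : ∀ z ∈ ball (0:ℂ) 1,
      z * deriv h z * (1 + (B:ℂ) * z * ω z) = ((A:ℂ) - (B:ℂ)) * (z * ω z) := by
    intro z hz
    rcases eq_or_ne z 0 with rfl | hz0
    · simp
    · have hfd : deriv f z = Complex.exp (h z) * (1 + z * deriv h z) := by
        have hev : f =ᶠ[nhds z] (fun w => w * Complex.exp (h w)) :=
          Filter.eventuallyEq_of_mem (isOpen_ball.mem_nhds hz) hfz
        rw [hev.deriv_eq]
        have hd : HasDerivAt (fun w => w * Complex.exp (h w))
            (1 * Complex.exp (h z) + z * (Complex.exp (h z) * deriv h z)) z :=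
          (hasDerivAt_id z).mul ((hh_dAt z hz).hasDerivAt.cexp)
        rw [hd.deriv]
        ring
      have he := hode z hz
      rw [hfz z hz, hfd] at he
      have hzn : z * Complex.exp (h z) ≠ 0 := mul_ne_zero hz0 (Complex.exp_ne_zero _)
      have h0 : z * Complex.exp (h z) *
          (z * deriv h z * (1 + (B:ℂ) * z * ω z) - ((A:ℂ)-(B:ℂ)) * (z * ω z)) = 0 := by
        linear_combination he
      exact sub_eq_zero.mp ((mul_eq_zero.mp h0).resolve_left hzn)
  -- the fundamental identity F = ω G
  have hFG : ∀ z ∈ ball (0:ℂ) 1, F z = ω z * G z := by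
    intro z hz
    have hdg : deriv g z = g z * (-(lam:ℂ) * deriv h z) := (hg_dAt z hz).deriv
    have hk := hkey z hz
    simp only [hF, hG]
    rw [hdg]
    linear_combination (-(lam:ℂ) * g z) * hk + (z * ω z * g z) * hC
  -- coefficient sequences
  set cF : ℕ → ℂ := fun n => (n : ℂ) * a n with hcF_def
  set cG : ℕ → ℂ := fun n => Nat.casesOn n 0 (fun m => -((C + (B:ℂ) * m) * a m)) with hcG_def
  have hg_rep : ∀ z ∈ ball (0:ℂ) 1, HasSum (fun k => a k * z ^ k) (g z) := hasum
  have hgc_circ : ∀ {r : ℝ}, 0 < r → r < 1 → Continuous (fun θ => g (CluniePrf.cir r θ)) :=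
    fun {r} hr0 hr1 => hg_dOn.continuousOn.comp_continuous (CluniePrf.cont_cir r)
      (CluniePrf.cir_mem_ball hr0.le hr1)
  have hFc_circ : ∀ {r : ℝ}, 0 < r → r < 1 → Continuous (fun θ => F (CluniePrf.cir r θ)) :=
    fun {r} hr0 hr1 => hF_cont.comp_continuous (CluniePrf.cont_cir r)
      (CluniePrf.cir_mem_ball hr0.le hr1)
  -- per-radius Clunie inequality
  have main : ∀ r : ℝ, 0 < r → r < 1 →
      ∑ n ∈ Finset.range (l+1), ‖cF n * (r:ℂ)^n‖^2
        ≤ ∑ n ∈ Finset.range (l+1), ‖cG n * (r:ℂ)^n‖^2 := by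
    intro r hr0 hr1
    set R : ℝ := (1+r)/2 with hR
    have hrR : r < R := by rw [hR]; linarith
    have hR1 : R < 1 := by rw [hR]; linarith
    have hR0 : 0 < R := by rw [hR]; linarith
    -- Fourier coefficients of F on the circle
    have hcF : ∀ n : ℕ, ∫ θ in (0:ℝ)..(2*Real.pi), F (CluniePrf.cir r θ) * CluniePrf.em (-(n:ℤ)) θ
        = (2*Real.pi) * (cF n * (r:ℂ)^n) := by
      intro n
      have h1 := CluniePrf.deriv_coeff hg_dOn hdg_cont hr0 hr1 n
      have h2 := CluniePrf.extraction hg_rep hr0 hr1 n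
      calc ∫ θ in (0:ℝ)..(2*Real.pi), F (CluniePrf.cir r θ) * CluniePrf.em (-(n:ℤ)) θ
          = ∫ θ in (0:ℝ)..(2*Real.pi),
              (CluniePrf.cir r θ * deriv g (CluniePrf.cir r θ)) * CluniePrf.em (-(n:ℤ)) θ := rfl
        _ = (n:ℂ) * ∫ θ in (0:ℝ)..(2*Real.pi), g (CluniePrf.cir r θ) * CluniePrf.em (-(n:ℤ)) θ := h1
        _ = (n:ℂ) * ((2*Real.pi) * (a n * (r:ℂ)^n)) := by rw [h2]
        _ = (2*Real.pi) * (cF n * (r:ℂ)^n) := by rw [hcF_def]; ring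
    -- Fourier coefficients of G on the circle
    have hcGint : ∀ n : ℕ,
        (∫ θ in (0:ℝ)..(2*Real.pi), G (CluniePrf.cir r θ) * CluniePrf.em (-(n:ℤ)) θ)
        = (2*Real.pi) * (cG n * (r:ℂ)^n) := by
      intro n
      cases n with
      | zero =>
        have hptw : ∀ θ ∈ Set.uIcc (0:ℝ) (2*Real.pi),
            G (CluniePrf.cir r θ) * CluniePrf.em (-((0:ℕ):ℤ)) θ
            = (-(r:ℂ)) * ((fun z => C * g z + (B:ℂ) * F z) (CluniePrf.cir r θ)
                * CluniePrf.em (((1:ℕ):ℤ)) θ) := by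
          intro θ _
          have h2 : CluniePrf.cir r θ = (r:ℂ) * CluniePrf.em 1 θ := CluniePrf.cir_eq_em r θ
          have h0 : CluniePrf.em (-((0:ℕ):ℤ)) θ = 1 := by
            simpa using CluniePrf.em_zero_freq θ
          have h1 : CluniePrf.em (((1:ℕ):ℤ)) θ = CluniePrf.em 1 θ := by norm_num
          rw [h0, h1]
          simp only [hG]
          linear_combination (-(C * g (CluniePrf.cir r θ) + (B:ℂ) * F (CluniePrf.cir r θ))) * h2
        rw [intervalIntegral.integral_congr hptw, intervalIntegral.integral_const_mul,
          CluniePrf.omega_orth huCB_dOn hr0 hr1 (le_refl 1), mul_zero]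
        simp [hcG_def]
      | succ m =>
        have hptw : ∀ θ ∈ Set.uIcc (0:ℝ) (2*Real.pi),
            G (CluniePrf.cir r θ) * CluniePrf.em (-((m+1:ℕ):ℤ)) θ
            = (-(r:ℂ)) * (C * (g (CluniePrf.cir r θ) * CluniePrf.em (-(m:ℤ)) θ)
                + (B:ℂ) * (F (CluniePrf.cir r θ) * CluniePrf.em (-(m:ℤ)) θ)) := by
          intro θ _
          have h1 : CluniePrf.em (-((m+1:ℕ):ℤ)) θ
              = CluniePrf.em (-1) θ * CluniePrf.em (-(m:ℤ)) θ := by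
            rw [CluniePrf.em_mul]; congr 1; push_cast; ring
          have h2 : CluniePrf.cir r θ * CluniePrf.em (-1) θ = (r:ℂ) := by
            rw [CluniePrf.cir_eq_em, mul_assoc, CluniePrf.em_mul]
            norm_num [CluniePrf.em_zero_freq]
          rw [h1]
          simp only [hG]
          linear_combination (-(C * g (CluniePrf.cir r θ) + (B:ℂ) * F (CluniePrf.cir r θ))
              * CluniePrf.em (-(m:ℤ)) θ) * h2
        have i1 : IntervalIntegrable (fun θ => C * (g (CluniePrf.cir r θ) * CluniePrf.em (-(m:ℤ)) θ))
            MeasureTheory.volume 0 (2*Real.pi) :=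
          (continuous_const.mul ((hgc_circ hr0 hr1).mul (CluniePrf.cont_em _))).intervalIntegrable _ _
        have i2 : IntervalIntegrable (fun θ => (B:ℂ) * (F (CluniePrf.cir r θ) * CluniePrf.em (-(m:ℤ)) θ))
            MeasureTheory.volume 0 (2*Real.pi) :=
          (continuous_const.mul ((hFc_circ hr0 hr1).mul (CluniePrf.cont_em _))).intervalIntegrable _ _
        rw [intervalIntegral.integral_congr hptw, intervalIntegral.integral_const_mul,
          intervalIntegral.integral_add i1 i2, intervalIntegral.integral_const_mul,
          intervalIntegral.integral_const_mul, CluniePrf.extraction hg_rep hr0 hr1 m, hcF m]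
        have hcGm : cG (m+1) = -((C + (B:ℂ) * m) * a m) := rfl
        rw [hcGm, hcF_def]
        push_cast
        ring
    -- power series representation of G with coefficients cG
    obtain ⟨q, hq⟩ := CluniePrf.rep_of_differentiable hG_dOn hR0 hR1
    have hqcG : q = cG := by
      funext k
      have e1 := CluniePrf.extraction hq hr0 hrR k
      have e2 := hcGint k
      have e3 := e1.symm.trans e2
      have h2π : ((2:ℂ) * (Real.pi:ℂ)) ≠ 0 :=
        mul_ne_zero two_ne_zero (by exact_mod_cast Real.pi_ne_zero)
      have e4 : q k * (r:ℂ)^k = cG k * (r:ℂ)^k := mul_left_cancel₀ h2π e3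
      have hrk : ((r:ℂ))^k ≠ 0 := pow_ne_zero _ (by exact_mod_cast hr0.ne')
      exact mul_right_cancel₀ hrk e4
    rw [hqcG] at hq
    exact CluniePrf.clunie_core hr0 hrR hR1.le hF_cont hG_dOn hω_dOn hω1 hFG cF cG hq hcF l
  -- final arithmetic
  have ha0n : ‖a 0‖ = 1 := by rw [ha0]; simp
  have hsq : ∀ (m : ℕ), 1 ≤ m → (c + B*(m:ℝ))^2 ≤ (m:ℝ)^2 := by
    intro m hm
    have hm1 : (1:ℝ) ≤ (m:ℝ) := by exact_mod_cast hm
    have q1 : (0:ℝ) ≤ ((m:ℝ)-1)*(1-B) := mul_nonneg (by linarith) (by linarith)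
    have q2 : (0:ℝ) ≤ (m:ℝ)*(1+B) := mul_nonneg (by linarith) (by linarith)
    have p1 : (0:ℝ) ≤ (m:ℝ)*(1-B) - c := by nlinarith
    have p2 : (0:ℝ) ≤ (m:ℝ)*(1+B) + c := by linarith
    nlinarith [mul_nonneg p1 p2]
  have key : ∀ r : ℝ, 0 < r → r < 1 →
      ((l:ℝ)^2 * ‖a l‖^2) * r^(2*l) ≤ c^2 * r^2 := by
    intro r hr0 hr1
    have hm := main r hr0 hr1
    have hnr : ‖(r:ℂ)‖ = r := by
      rw [Complex.norm_real, Real.norm_eq_abs, abs_of_pos hr0]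
    have hLHS : ∀ n : ℕ, ‖cF n * (r:ℂ)^n‖^2 = ((n:ℝ)^2 * ‖a n‖^2) * r^(2*n) := by
      intro n
      have h1 : ‖cF n * (r:ℂ)^n‖ = (n:ℝ) * ‖a n‖ * r^n := by
        rw [hcF_def]
        simp only [norm_mul, norm_pow, Complex.norm_natCast, hnr]
      rw [h1]
      ring
    have hRHS : ∀ m : ℕ, ‖cG (m+1) * (r:ℂ)^(m+1)‖^2
        = ((c + B*(m:ℝ))^2 * ‖a m‖^2) * r^(2*(m+1)) := by
      intro m
      have hCB : C + (B:ℂ)*(m:ℕ) = ((c + B*(m:ℝ) : ℝ) : ℂ) := by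
        rw [hCc]; push_cast; ring
      have hcGm : cG (m+1) = -((C + (B:ℂ) * m) * a m) := rfl
      have h1 : ‖cG (m+1) * (r:ℂ)^(m+1)‖ = |c + B*(m:ℝ)| * ‖a m‖ * r^(m+1) := by
        rw [hcGm, norm_mul, norm_neg, norm_mul, norm_pow, hnr, hCB, Complex.norm_real,
          Real.norm_eq_abs]
      rw [h1, mul_pow, mul_pow, _root_.sq_abs]
      ring
    have hu : ∑ n ∈ Finset.range (l+1), ‖cF n * (r:ℂ)^n‖^2
        = (∑ n ∈ Finset.range l, ((n:ℝ)^2 * ‖a n‖^2) * r^(2*n))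
          + ((l:ℝ)^2 * ‖a l‖^2) * r^(2*l) := by
      rw [Finset.sum_range_succ, hLHS l]
      congr 1
      exact Finset.sum_congr rfl (fun n _ => hLHS n)
    have hw : ∑ n ∈ Finset.range (l+1), ‖cG n * (r:ℂ)^n‖^2
        = ∑ m ∈ Finset.range l, ((c + B*(m:ℝ))^2 * ‖a m‖^2) * r^(2*(m+1)) := by
      rw [Finset.sum_range_succ']
      have hcG0 : cG 0 = 0 := rfl
      rw [hcG0]
      simp only [zero_mul, norm_zero]
      rw [Finset.sum_congr rfl (fun m _ => hRHS m)]
      norm_num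
    rw [hu, hw] at hm
    have hstep : ∑ m ∈ Finset.range l, (((c + B*(m:ℝ))^2 * ‖a m‖^2) * r^(2*(m+1))
          - ((m:ℝ)^2 * ‖a m‖^2) * r^(2*m))
        ≤ ∑ m ∈ Finset.range l, (if m = 0 then c^2*r^2 else 0) := by
      apply Finset.sum_le_sum
      intro m _
      rcases Nat.eq_zero_or_pos m with rfl | hm
      · simp only [if_pos rfl]
        rw [ha0n]
        norm_num
      · rw [if_neg (by omega)]
        have h1 : (c + B*(m:ℝ))^2 ≤ (m:ℝ)^2 := hsq m hm
        have e1 : r^(2*(m+1)) = r^(2*m) * r^2 := by ring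
        have e2 : r^2 ≤ 1 := by nlinarith [hr0, hr1]
        have e3 : (0:ℝ) ≤ r^(2*m) := by positivity
        have e4 : (0:ℝ) ≤ ‖a m‖^2 := by positivity
        have hmul : (c + B*(m:ℝ))^2 * r^2 ≤ (m:ℝ)^2 := by
          nlinarith [sq_nonneg (c + B*(m:ℝ)), h1, e2]
        rw [e1]
        have hcalc : ((c + B*(m:ℝ))^2 * ‖a m‖^2) * (r^(2*m) * r^2)
            ≤ ((m:ℝ)^2 * ‖a m‖^2) * r^(2*m) := by
          calc ((c + B*(m:ℝ))^2 * ‖a m‖^2) * (r^(2*m) * r^2)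
              = ((c + B*(m:ℝ))^2 * r^2) * (‖a m‖^2 * r^(2*m)) := by ring
            _ ≤ (m:ℝ)^2 * (‖a m‖^2 * r^(2*m)) :=
                mul_le_mul_of_nonneg_right hmul (mul_nonneg e4 e3)
            _ = ((m:ℝ)^2 * ‖a m‖^2) * r^(2*m) := by ring
        linarith
    have hite : ∑ m ∈ Finset.range l, (if m = 0 then c^2*r^2 else 0) = c^2*r^2 := by
      rw [Finset.sum_ite_eq' (Finset.range l) 0 (fun _ => c^2*r^2)]
      rw [if_pos (Finset.mem_range.mpr (by omega))]
    have hsub : ∑ m ∈ Finset.range l, (((c + B*(m:ℝ))^2 * ‖a m‖^2) * r^(2*(m+1))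
          - ((m:ℝ)^2 * ‖a m‖^2) * r^(2*m))
        = (∑ m ∈ Finset.range l, ((c + B*(m:ℝ))^2 * ‖a m‖^2) * r^(2*(m+1)))
          - ∑ m ∈ Finset.range l, ((m:ℝ)^2 * ‖a m‖^2) * r^(2*m) :=
      Finset.sum_sub_distrib _ _
    linarith [hm, hstep, hite, hsub.symm.le, hsub.le]
  have hlim : (l:ℝ)^2 * ‖a l‖^2 ≤ c^2 := by
    have h1 : Filter.Tendsto (fun r : ℝ => ((l:ℝ)^2*‖a l‖^2)*r^(2*l))
        (nhdsWithin 1 (Set.Iio 1)) (nhds (((l:ℝ)^2*‖a l‖^2)*(1:ℝ)^(2*l))) :=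
      ((continuous_const.mul (continuous_pow _)).tendsto 1).mono_left nhdsWithin_le_nhds
    have h2 : Filter.Tendsto (fun r : ℝ => c^2*r^2)
        (nhdsWithin 1 (Set.Iio 1)) (nhds (c^2*(1:ℝ)^2)) :=
      ((continuous_const.mul (continuous_pow _)).tendsto 1).mono_left nhdsWithin_le_nhds
    have hev : (fun r : ℝ => ((l:ℝ)^2*‖a l‖^2)*r^(2*l)) ≤ᶠ[nhdsWithin 1 (Set.Iio 1)]
        (fun r => c^2*r^2) := by
      filter_upwards [Ioo_mem_nhdsLT_of_mem (Set.mem_Ioc.mpr ⟨zero_lt_one, le_refl (1:ℝ)⟩)]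
        with r hr
      exact key r hr.1 hr.2
    have hfin := le_of_tendsto_of_tendsto h1 h2 hev
    rw [one_pow, one_pow, mul_one, mul_one] at hfin
    exact hfin
  have hl1 : (1:ℝ) ≤ (l:ℝ) := by exact_mod_cast hl
  have hl0 : (0:ℝ) < (l:ℝ) := by linarith
  rw [le_div_iff₀ hl0]
  nlinarith [hlim, hc0, mul_nonneg (norm_nonneg (a l)) hl0.le]
end CluniePrf
end
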